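/- arXiv:1209.1118 — 13 statements merged into one kernel-verified Lean document; each statement's English description precedes it below -/
import Mathlib

section
/- Let I ⊆ ℝ be a nonempty open interval, let c ∈ ℝ, and let v : I → ℝ be three times differentiable with v(t) > 0 for all t ∈ I and v(t)·v''(t) − v'(t)² = c for all t ∈ I. Then there exists a constant k ∈ ℝ such that v''(t) = k·v(t) for all t ∈ I, and moreover v'(t)² − k·v(t)² = −c for all t ∈ I. -/
/-- If `v > 0` is three times differentiable on a nonempty open interval `I` and
satisfies `v·v'' − (v')² = c` on `I`, then there is a constant `k` with `v'' = k·v`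
on `I`, and moreover `(v')² − k·v² = −c` on `I`. -/
theorem stmt_0 (I : Set ℝ) (hI_open : IsOpen I) (hI_ne : I.Nonempty)
    (hI_conn : I.OrdConnected) (c : ℝ) (v v' v'' v''' : ℝ → ℝ)
    (hv' : ∀ t ∈ I, HasDerivAt v (v' t) t)
    (hv'' : ∀ t ∈ I, HasDerivAt v' (v'' t) t)
    (hv''' : ∀ t ∈ I, HasDerivAt v'' (v''' t) t)
    (hpos : ∀ t ∈ I, 0 < v t)
    (heq : ∀ t ∈ I, v t * v'' t - (v' t) ^ 2 = c) :
    ∃ k : ℝ, (∀ t ∈ I, v'' t = k * v t) ∧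
      (∀ t ∈ I, (v' t) ^ 2 - k * (v t) ^ 2 = -c) := by
  obtain ⟨t₀, ht₀⟩ := hI_ne
  set g : ℝ → ℝ := fun t => v'' t / v t with hg_def
  -- derivative of the combination is zero
  have hkey : ∀ t ∈ I, v''' t * v t - v'' t * v' t = 0 := by
    intro t ht
    have hD : HasDerivAt (fun t => v t * v'' t - (v' t) ^ 2)
        (v' t * v'' t + v t * v''' t - 2 * v' t ^ (2 - 1) * v'' t) t :=
      ((hv' t ht).mul (hv''' t ht)).sub ((hv'' t ht).pow 2)
    have hC : HasDerivAt (fun t => v t * v'' t - (v' t) ^ 2) 0 t := by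
      have : (fun t => v t * v'' t - (v' t) ^ 2) =ᶠ[nhds t] fun _ => c :=
        Filter.eventuallyEq_of_mem (hI_open.mem_nhds ht) heq
      exact (hasDerivAt_const t c).congr_of_eventuallyEq this
    have := hC.unique hD
    norm_num at this
    nlinarith [this]
  have hgderiv : ∀ t ∈ I, HasDerivAt g 0 t := by
    intro t ht
    have hne := (hpos t ht).ne'
    have : HasDerivAt g ((v''' t * v t - v'' t * v' t) / (v t) ^ 2) t :=
      (hv''' t ht).div (hv' t ht) hne
    rwa [hkey t ht, zero_div] at this
  have hconv : Convex ℝ I := convex_iff_ordConnected.mpr hI_conn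
  have hconst : ∀ t ∈ I, g t = g t₀ := by
    intro t ht
    refine hconv.is_const_of_fderivWithin_eq_zero
      (fun x hx => ((hgderiv x hx).differentiableAt).differentiableWithinAt)
      (fun x hx => ?_) ht ht₀
    have h1 : fderivWithin ℝ g I x = fderiv ℝ g x :=
      fderivWithin_of_isOpen hI_open hx
    have h2 : deriv g x = 0 := (hgderiv x hx).deriv
    ext
    simp [h1, ← toSpanSingleton_deriv, h2]
  refine ⟨g t₀, ?_, ?_⟩
  · intro t ht
    have := hconst t ht
    have hne := (hpos t ht).ne'
    simp only [hg_def] at this ⊢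
    rw [← this]; field_simp
  · intro t ht
    have h1 : v'' t = g t₀ * v t := by
      have := hconst t ht
      have hne := (hpos t ht).ne'
      simp only [hg_def] at this ⊢
      rw [← this]; field_simp
    have h2 := heq t ht
    have h3 : g t₀ * v t ^ 2 = v'' t * v t := by rw [h1]; ring
    linarith
end

section
/- Let I ⊆ ℝ be a nonempty open interval, let A, ω ∈ ℝ, let σ : I → ℝ be twice differentiable with σ'(t) > 0 for all t ∈ I, and let r : I → ℝ be differentiable with r'(t) = 1/σ'(t) for all t ∈ I. Then σ(t) = σ''(t)·(A + ω·r(t)) + ω holds for all t ∈ I if and only if the function t ↦ (A + ω·r(t))·σ'(t)² − σ(t)·(σ(t) − ω) is constant on I. -/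
/-- On a nonempty open interval `I`, with `σ' > 0` and `r' = 1/σ'`,
the ODE `σ = σ''·(A + ω·r) + ω` holds on `I` iff the quantity
`(A + ω·r)·(σ')² − σ·(σ − ω)` is constant on `I`. -/
theorem stmt_1 (I : Set ℝ) (hI_open : IsOpen I) (hI_ne : I.Nonempty)
    (hI_conn : I.OrdConnected) (A ω : ℝ) (σ σ' σ'' r : ℝ → ℝ)
    (hσ' : ∀ t ∈ I, HasDerivAt σ (σ' t) t)
    (hσ'' : ∀ t ∈ I, HasDerivAt σ' (σ'' t) t)
    (hσ'pos : ∀ t ∈ I, 0 < σ' t)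
    (hr : ∀ t ∈ I, HasDerivAt r (1 / σ' t) t) :
    (∀ t ∈ I, σ t = σ'' t * (A + ω * r t) + ω) ↔
      (∃ K : ℝ, ∀ t ∈ I,
        (A + ω * r t) * (σ' t) ^ 2 - σ t * (σ t - ω) = K) := by
  set F : ℝ → ℝ := fun t => (A + ω * r t) * (σ' t) ^ 2 - σ t * (σ t - ω) with hFdef
  have hconv : Convex ℝ I := convex_iff_ordConnected.mpr hI_conn
  have hF : ∀ t ∈ I, HasDerivAt F
      (2 * σ' t * (σ'' t * (A + ω * r t) + ω - σ t)) t := by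
    intro t ht
    have hne : σ' t ≠ 0 := (hσ'pos t ht).ne'
    have h1 : HasDerivAt (fun t => A + ω * r t) (ω * (1 / σ' t)) t :=
      ((hr t ht).const_mul ω).const_add A
    have h2 : HasDerivAt (fun t => (σ' t) ^ 2)
        ((2 : ℕ) * σ' t ^ (2 - 1) * σ'' t) t := (hσ'' t ht).pow 2
    have h3 := h1.mul h2
    have h4 := (hσ' t ht).mul ((hσ' t ht).sub_const ω)
    have h5 := h3.sub h4
    refine h5.congr_deriv ?_
    field_simp
    ring
  constructor
  · intro hODE
    obtain ⟨t₀, ht₀⟩ := hI_ne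
    refine ⟨F t₀, fun t ht => ?_⟩
    have hzero : ∀ s ∈ I, HasDerivAt F 0 s := by
      intro s hs
      have := hF s hs
      rw [hODE s hs] at this
      simpa using this
    have hdiff : DifferentiableOn ℝ F I := fun s hs =>
      ((hzero s hs).differentiableAt).differentiableWithinAt
    have := hconv.is_const_of_fderivWithin_eq_zero hdiff (fun s hs => ?_) ht ht₀
    · exact this
    · have hu : UniqueDiffWithinAt ℝ I s := hI_open.uniqueDiffWithinAt hs
      rw [(hzero s hs).hasFDerivAt.hasFDerivWithinAt.fderivWithin hu]
      ext; simp
  · rintro ⟨K, hK⟩ t ht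
    have hloc : F =ᶠ[nhds t] (fun _ => K) := by
      filter_upwards [hI_open.mem_nhds ht] with s hs using hK s hs
    have h0 : HasDerivAt F 0 t :=
      (hasDerivAt_const t K).congr_of_eventuallyEq hloc
    have := (hF t ht).unique h0
    have hne : σ' t ≠ 0 := (hσ'pos t ht).ne'
    have h2 : σ'' t * (A + ω * r t) + ω - σ t = 0 := by
      rcases mul_eq_zero.mp this with h | h
      · exact absurd h (by positivity)
      · exact h
    linarith
end

section
/- Let n ≥ 3 be an integer, let Q > 0 and P ∈ ℝ, let I ⊆ ℝ be a nonempty open interval, and let v : I → ℝ be twice differentiable with v(t) > 0, v''(t) = −(Q/(n−1))·v(t), and v'(t)² + (Q/(n−1))·v(t)² = P/(n−2) for all t ∈ I. Then P > 0, and setting ν = √(Q/(n−1)) there exists t₀ ∈ ℝ such that v(t) = (√(P/(n−2))/ν)·sin(ν·(t − t₀)) for all t ∈ I. -/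
/-- The case `Q > 0` of the classification of positive solutions of
`v'' = −(Q/(n−1))·v` with first integral `(v')² + (Q/(n−1))·v² = P/(n−2)`:
necessarily `P > 0` and `v(t) = (√(P/(n−2))/ν)·sin(ν·(t − t₀))` with
`ν = √(Q/(n−1))`. -/
theorem stmt_2 (n : ℕ) (hn : 3 ≤ n) (Q P : ℝ) (hQ : 0 < Q)
    (I : Set ℝ) (hI_open : IsOpen I) (hI_ne : I.Nonempty)
    (hI_conn : I.OrdConnected) (v v' v'' : ℝ → ℝ)
    (hv' : ∀ t ∈ I, HasDerivAt v (v' t) t)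
    (hv'' : ∀ t ∈ I, HasDerivAt v' (v'' t) t)
    (hpos : ∀ t ∈ I, 0 < v t)
    (hode : ∀ t ∈ I, v'' t = -(Q / (n - 1)) * v t)
    (hint : ∀ t ∈ I, (v' t) ^ 2 + (Q / (n - 1)) * (v t) ^ 2 = P / (n - 2)) :
    0 < P ∧
      ∃ t₀ : ℝ, ∀ t ∈ I,
        v t = (Real.sqrt (P / (n - 2)) / Real.sqrt (Q / (n - 1))) *
          Real.sin (Real.sqrt (Q / (n - 1)) * (t - t₀)) := by
  obtain ⟨t₁, ht₁⟩ := hI_ne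
  have hn3 : (3:ℝ) ≤ (n:ℝ) := by exact_mod_cast hn
  have hn1 : (0:ℝ) < (n:ℝ) - 1 := by linarith
  have hn2 : (0:ℝ) < (n:ℝ) - 2 := by linarith
  set k : ℝ := Q / ((n:ℝ) - 1) with hk
  have hkpos : 0 < k := div_pos hQ hn1
  set ν := Real.sqrt k with hνdef
  have hνpos : 0 < ν := Real.sqrt_pos.2 hkpos
  have hνne : ν ≠ 0 := hνpos.ne'
  have hν2 : ν ^ 2 = k := Real.sq_sqrt hkpos.le
  -- P > 0
  have hPk : 0 < P / ((n:ℝ) - 2) := by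
    have h1 := hint t₁ ht₁
    have h2 : 0 < k * v t₁ ^ 2 := mul_pos hkpos (pow_pos (hpos t₁ ht₁) 2)
    have h3 := sq_nonneg (v' t₁)
    linarith
  have hP : 0 < P := by
    have := mul_pos hPk hn2
    rwa [div_mul_cancel₀ _ hn2.ne'] at this
  refine ⟨hP, ?_⟩
  -- auxiliary functions
  set a : ℝ → ℝ := fun t => v t * Real.sin (ν * t) + v' t / ν * Real.cos (ν * t) with ha
  set b : ℝ → ℝ := fun t => v t * Real.cos (ν * t) - v' t / ν * Real.sin (ν * t) with hb
  have hsin : ∀ t : ℝ, HasDerivAt (fun s => Real.sin (ν * s)) (ν * Real.cos (ν * t)) t := by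
    intro t
    have h : HasDerivAt (fun s => Real.sin (ν * s)) (Real.cos (ν * t) * (ν * 1)) t :=
      (Real.hasDerivAt_sin (ν * t)).comp t ((hasDerivAt_id t).const_mul ν)
    simpa [mul_comm] using h
  have hcos : ∀ t : ℝ, HasDerivAt (fun s => Real.cos (ν * s)) (-(ν * Real.sin (ν * t))) t := by
    intro t
    have h : HasDerivAt (fun s => Real.cos (ν * s)) (-Real.sin (ν * t) * (ν * 1)) t :=
      (Real.hasDerivAt_cos (ν * t)).comp t ((hasDerivAt_id t).const_mul ν)
    have h2 : -Real.sin (ν * t) * (ν * 1) = -(ν * Real.sin (ν * t)) := by ring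
    rwa [h2] at h
  have hda : ∀ t ∈ I, HasDerivAt a 0 t := by
    intro t ht
    have h := (((hv' t ht).mul (hsin t)).add (((hv'' t ht).div_const ν).mul (hcos t)))
    have heq : v' t * Real.sin (ν * t) + v t * (ν * Real.cos (ν * t)) +
        (v'' t / ν * Real.cos (ν * t) + v' t / ν * -(ν * Real.sin (ν * t))) = 0 := by
      rw [hode t ht, ← hν2]
      field_simp
      ring
    rw [heq] at h
    exact h
  have hdb : ∀ t ∈ I, HasDerivAt b 0 t := by
    intro t ht
    have h := (((hv' t ht).mul (hcos t)).sub (((hv'' t ht).div_const ν).mul (hsin t)))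
    have heq : v' t * Real.cos (ν * t) + v t * -(ν * Real.sin (ν * t)) -
        (v'' t / ν * Real.sin (ν * t) + v' t / ν * (ν * Real.cos (ν * t))) = 0 := by
      rw [hode t ht, ← hν2]
      field_simp
      ring
    rw [heq] at h
    exact h
  have hconv : Convex ℝ I := convex_iff_ordConnected.2 hI_conn
  have hconst : ∀ f : ℝ → ℝ, (∀ t ∈ I, HasDerivAt f 0 t) → ∀ t ∈ I, f t = f t₁ := by
    intro f hf t ht
    refine hconv.is_const_of_fderivWithin_eq_zero
      (fun x hx => ((hf x hx).differentiableAt).differentiableWithinAt) ?_ ht ht₁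
    intro x hx
    rw [fderivWithin_of_isOpen hI_open hx, (hf x hx).hasFDerivAt.fderiv]
    ext
    simp
  set A := a t₁ with hA
  set B := b t₁ with hB
  set R : ℝ := Real.sqrt (P / ((n:ℝ) - 2)) / ν with hR
  have hRpos : 0 < R := div_pos (Real.sqrt_pos.2 hPk) hνpos
  have hR2 : R ^ 2 = (P / ((n:ℝ) - 2)) / ν ^ 2 := by
    rw [hR, div_pow, Real.sq_sqrt hPk.le]
  have hAB : A ^ 2 + B ^ 2 = R ^ 2 := by
    have h1 := hint t₁ ht₁
    rw [← hν2] at h1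
    have hs := Real.sin_sq_add_cos_sq (ν * t₁)
    have hA' : A = v t₁ * Real.sin (ν * t₁) + v' t₁ / ν * Real.cos (ν * t₁) := rfl
    have hB' : B = v t₁ * Real.cos (ν * t₁) - v' t₁ / ν * Real.sin (ν * t₁) := rfl
    rw [hA', hB', hR2, ← h1]
    field_simp
    nlinarith [hs, sq_nonneg (v t₁), sq_nonneg (v' t₁)]
  -- the angle
  set z : ℂ := ⟨A, -B⟩ with hz
  have hzre : z.re = A := rfl
  have hzim : z.im = -B := rfl
  have habs : ‖z‖ = R := by
    rw [Complex.norm_def, Complex.normSq_apply, hzre, hzim]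
    rw [show A * A + -B * -B = R ^ 2 by linear_combination hAB]
    exact Real.sqrt_sq hRpos.le
  have hzne : z ≠ 0 := by
    intro h
    rw [h, norm_zero] at habs
    exact hRpos.ne habs
  have hcosθ : Real.cos z.arg = A / R := by rw [Complex.cos_arg hzne, habs, hzre]
  have hsinθ : Real.sin z.arg = -B / R := by rw [Complex.sin_arg, habs, hzim]
  refine ⟨z.arg / ν, ?_⟩
  intro t ht
  have hat : a t = A := hconst a hda t ht
  have hbt : b t = B := hconst b hdb t ht
  have hv : v t = A * Real.sin (ν * t) + B * Real.cos (ν * t) := by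
    have hkey : a t * Real.sin (ν * t) + b t * Real.cos (ν * t) = v t := by
      have hs := Real.sin_sq_add_cos_sq (ν * t)
      show (v t * Real.sin (ν * t) + v' t / ν * Real.cos (ν * t)) * Real.sin (ν * t) +
        (v t * Real.cos (ν * t) - v' t / ν * Real.sin (ν * t)) * Real.cos (ν * t) = v t
      linear_combination v t * hs
    rw [hat, hbt] at hkey
    rw [← hkey]
  have hνt₀ : ν * (t - z.arg / ν) = ν * t - z.arg := by
    rw [mul_sub, mul_div_cancel₀ _ hνne]
  show v t = R * Real.sin (ν * (t - z.arg / ν))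
  rw [hv, hνt₀, Real.sin_sub, hcosθ, hsinθ]
  field_simp
  ring
end

section
/- Let n ≥ 3 be an integer, let Q < 0 and P ∈ ℝ, set κ = √(−Q/(n−1)), let I ⊆ ℝ be a nonempty open interval, and let v : I → ℝ be twice differentiable with v(t) > 0, v''(t) = −(Q/(n−1))·v(t), and v'(t)² + (Q/(n−1))·v(t)² = P/(n−2) for all t ∈ I. Then: if P > 0, there exist t₀ ∈ ℝ and ε ∈ {1, −1} such that v(t) = (√(P/(n−2))/κ)·sinh(ε·κ·(t − t₀)) for all t ∈ I; if P = 0, there exist a > 0 and ε ∈ {1, −1} such that v(t) = a·exp(ε·κ·t) for all t ∈ I; and if P < 0, there exists t₀ ∈ ℝ such that v(t) = (√(−P/(n−2))/κ)·cosh(κ·(t − t₀)) for all t ∈ I. -/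
/-- Constancy on a convex set from vanishing derivative. -/
lemma my_const_on {I : Set ℝ} (hconv : Convex ℝ I) (w : ℝ → ℝ)
    (hw : ∀ t ∈ I, HasDerivAt w 0 t) : ∀ x ∈ I, ∀ y ∈ I, w x = w y := by
  intro x hx y hy
  have h := Convex.norm_image_sub_le_of_norm_hasDerivWithin_le
    (f := w) (f' := fun _ => 0) (C := 0)
    (fun t ht => (hw t ht).hasDerivWithinAt) (fun t _ => by simp) hconv hy hx
  simpa [sub_eq_zero] using h

set_option maxHeartbeats 1000000

/-- The case `Q < 0` of the classification of positive solutions of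
`v'' = −(Q/(n−1))·v` with first integral `(v')² + (Q/(n−1))·v² = P/(n−2)`,
with `κ = √(−Q/(n−1))`: if `P > 0`, `v` is a sinh; if `P = 0`, an exponential;
if `P < 0`, a cosh. -/
theorem stmt_4 (n : ℕ) (hn : 3 ≤ n) (Q P : ℝ) (hQ : Q < 0)
    (I : Set ℝ) (hI_open : IsOpen I) (hI_ne : I.Nonempty)
    (hI_conn : I.OrdConnected) (v v' v'' : ℝ → ℝ)
    (hv' : ∀ t ∈ I, HasDerivAt v (v' t) t)
    (hv'' : ∀ t ∈ I, HasDerivAt v' (v'' t) t)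
    (hpos : ∀ t ∈ I, 0 < v t)
    (hode : ∀ t ∈ I, v'' t = -(Q / (n - 1)) * v t)
    (hint : ∀ t ∈ I, (v' t) ^ 2 + (Q / (n - 1)) * (v t) ^ 2 = P / (n - 2)) :
    (0 < P → ∃ t₀ ε : ℝ, (ε = 1 ∨ ε = -1) ∧
      ∀ t ∈ I, v t = (Real.sqrt (P / (n - 2)) / Real.sqrt (-Q / (n - 1))) *
        Real.sinh (ε * Real.sqrt (-Q / (n - 1)) * (t - t₀))) ∧
    (P = 0 → ∃ a ε : ℝ, 0 < a ∧ (ε = 1 ∨ ε = -1) ∧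
      ∀ t ∈ I, v t = a * Real.exp (ε * Real.sqrt (-Q / (n - 1)) * t)) ∧
    (P < 0 → ∃ t₀ : ℝ,
      ∀ t ∈ I, v t = (Real.sqrt (-P / (n - 2)) / Real.sqrt (-Q / (n - 1))) *
        Real.cosh (Real.sqrt (-Q / (n - 1)) * (t - t₀))) := by
  have hn1 : (0:ℝ) < (n:ℝ) - 1 := by
    have : (3:ℝ) ≤ n := by exact_mod_cast hn
    linarith
  have hn2 : (0:ℝ) < (n:ℝ) - 2 := by
    have : (3:ℝ) ≤ n := by exact_mod_cast hn
    linarith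
  set κ : ℝ := Real.sqrt (-Q / (n - 1)) with hκdef
  have hκsqpos : (0:ℝ) < -Q / (n-1) := div_pos (by linarith) hn1
  have hκ : 0 < κ := Real.sqrt_pos.mpr hκsqpos
  have hκ2 : κ ^ 2 = -Q / (n-1) := Real.sq_sqrt hκsqpos.le
  have hconv : Convex ℝ I := convex_iff_ordConnected.mpr hI_conn
  obtain ⟨t₁, ht₁⟩ := hI_ne
  -- the two conserved quantities
  set A : ℝ → ℝ := fun t => (v' t + κ * v t) * Real.exp (-(κ * t)) with hA
  set B : ℝ → ℝ := fun t => (v' t - κ * v t) * Real.exp (κ * t) with hB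
  have hode' : ∀ t ∈ I, v'' t = κ^2 * v t := by
    intro t ht; rw [hode t ht, hκ2]; ring
  have hAd : ∀ t ∈ I, HasDerivAt A 0 t := by
    intro t ht
    have he : HasDerivAt (fun t => Real.exp (-(κ * t))) (Real.exp (-(κ * t)) * (-κ)) t := by
      simpa using (((hasDerivAt_id t).const_mul κ).neg).exp
    have := (((hv'' t ht).add ((hv' t ht).const_mul κ)).mul he)
    refine this.congr_deriv ?_
    rw [hode' t ht, Pi.add_apply]; ring
  have hBd : ∀ t ∈ I, HasDerivAt B 0 t := by
    intro t ht
    have he : HasDerivAt (fun t => Real.exp (κ * t)) (Real.exp (κ * t) * κ) t := by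
      simpa using ((hasDerivAt_id t).const_mul κ).exp
    have := (((hv'' t ht).sub ((hv' t ht).const_mul κ)).mul he)
    refine this.congr_deriv ?_
    rw [hode' t ht, Pi.sub_apply]; ring
  set a : ℝ := A t₁ with ha
  set b : ℝ := B t₁ with hb
  have hAc : ∀ t ∈ I, A t = a := fun t ht => my_const_on hconv A hAd t ht t₁ ht₁
  have hBc : ∀ t ∈ I, B t = b := fun t ht => my_const_on hconv B hBd t ht t₁ ht₁
  -- formula for v
  have hvf : ∀ t ∈ I, v t = (a * Real.exp (κ * t) - b * Real.exp (-(κ * t))) / (2 * κ) := by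
    intro t ht
    have h1 : (v' t + κ * v t) * Real.exp (-(κ * t)) = a := hAc t ht
    have h2 : (v' t - κ * v t) * Real.exp (κ * t) = b := hBc t ht
    have e1 : v' t + κ * v t = a * Real.exp (κ * t) := by
      rw [← h1, mul_assoc, ← Real.exp_add]; simp
    have e2 : v' t - κ * v t = b * Real.exp (-(κ * t)) := by
      rw [← h2, mul_assoc, ← Real.exp_add]; simp
    have : 2 * κ * v t = a * Real.exp (κ * t) - b * Real.exp (-(κ * t)) := by
      linarith [e1, e2]
    field_simp
    linarith
  -- product ab
  have hab : a * b = P / (n - 2) := by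
    have : a * b = (v' t₁)^2 - κ^2 * (v t₁)^2 := by
      rw [ha, hb, hA, hB]
      simp only
      rw [show ((v' t₁ + κ * v t₁) * Real.exp (-(κ * t₁))) * ((v' t₁ - κ * v t₁) * Real.exp (κ * t₁))
        = (v' t₁ + κ * v t₁) * (v' t₁ - κ * v t₁) * (Real.exp (-(κ * t₁)) * Real.exp (κ * t₁)) by ring,
        ← Real.exp_add]
      simp; ring
    rw [this, hκ2, ← hint t₁ ht₁]; ring
  clear_value a b
  have hvpos := hpos t₁ ht₁
  have hvt₁ : 2 * κ * v t₁ = a * Real.exp (κ * t₁) - b * Real.exp (-(κ * t₁)) := by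
    have := hvf t₁ ht₁
    field_simp at this
    linarith
  have hposab : 0 < a * Real.exp (κ * t₁) - b * Real.exp (-(κ * t₁)) := by
    rw [← hvt₁]; positivity
  refine ⟨?_, ?_, ?_⟩
  · -- P > 0 : sinh
    intro hP
    have hC : 0 < P / (n-2) := div_pos hP hn2
    have hab' : 0 < a * b := hab ▸ hC
    have hsC : 0 < Real.sqrt (P / (n-2)) := Real.sqrt_pos.mpr hC
    have hsC2 : Real.sqrt (P / (n-2)) ^ 2 = P / (n-2) := Real.sq_sqrt hC.le
    have hane : a ≠ 0 := fun h => by simp [h] at hab'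
    rcases lt_or_gt_of_ne hane with haneg | hapos
    · -- a < 0, b < 0, ε = -1
      have hbneg : b < 0 := by
        by_contra h
        push_neg at h
        have := mul_nonneg (neg_nonneg.mpr haneg.le) h
        nlinarith
      refine ⟨Real.log (-b / Real.sqrt (P / (n-2))) / κ, -1, Or.inr rfl, ?_⟩
      intro t ht
      rw [hvf t ht]
      set t₀ := Real.log (-b / Real.sqrt (P / (n-2))) / κ
      have het₀ : Real.exp (κ * t₀) = -b / Real.sqrt (P / (n-2)) := by
        rw [show κ * t₀ = Real.log (-b / Real.sqrt (P / (n-2))) by simp only [t₀]; field_simp]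
        exact Real.exp_log (div_pos (by linarith) hsC)
      have hb' : -Real.sqrt (P / (n-2)) * Real.exp (κ * t₀) = b := by
        rw [het₀, neg_mul, mul_div_cancel₀ (-b) hsC.ne', neg_neg]
      have key : a * Real.exp (κ * t₀) = -Real.sqrt (P / (n-2)) := by
        rw [het₀, show a * (-b / Real.sqrt (P / (n-2)))
            = (a * -b) / Real.sqrt (P / (n-2)) by ring, div_eq_iff hsC.ne']
        linear_combination -hab + Real.mul_self_sqrt hC.le
      have ha' : -Real.sqrt (P / (n-2)) * Real.exp (-(κ * t₀)) = a := by
        rw [← key, mul_assoc, ← Real.exp_add]; simp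
      rw [Real.sinh_eq]
      rw [show (-1 : ℝ) * κ * (t - t₀) = -(κ*t) + κ*t₀ by ring]
      rw [show -(-(κ*t) + κ*t₀) = κ*t + -(κ*t₀) by ring]
      rw [Real.exp_add, Real.exp_add]
      rw [← ha', ← hb', div_mul_div_comm, mul_comm κ 2]
      congr 1
      ring
    · -- a > 0, b > 0, ε = 1
      have hbpos : 0 < b := by
        by_contra h
        push_neg at h
        have := mul_nonpos_of_nonneg_of_nonpos hapos.le h
        nlinarith
      refine ⟨Real.log (b / Real.sqrt (P / (n-2))) / κ, 1, Or.inl rfl, ?_⟩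
      intro t ht
      rw [hvf t ht]
      set t₀ := Real.log (b / Real.sqrt (P / (n-2))) / κ
      have het₀ : Real.exp (κ * t₀) = b / Real.sqrt (P / (n-2)) := by
        rw [show κ * t₀ = Real.log (b / Real.sqrt (P / (n-2))) by simp only [t₀]; field_simp]
        exact Real.exp_log (div_pos hbpos hsC)
      have hb' : Real.sqrt (P / (n-2)) * Real.exp (κ * t₀) = b := by
        rw [het₀]; exact mul_div_cancel₀ b hsC.ne'
      have key : a * Real.exp (κ * t₀) = Real.sqrt (P / (n-2)) := by
        rw [het₀, show a * (b / Real.sqrt (P / (n-2)))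
            = (a * b) / Real.sqrt (P / (n-2)) by ring, div_eq_iff hsC.ne']
        linear_combination hab - Real.mul_self_sqrt hC.le
      have ha' : Real.sqrt (P / (n-2)) * Real.exp (-(κ * t₀)) = a := by
        rw [← key, mul_assoc, ← Real.exp_add]; simp
      rw [Real.sinh_eq]
      rw [show (1 : ℝ) * κ * (t - t₀) = κ*t + -(κ*t₀) by ring]
      rw [show -(κ*t + -(κ*t₀)) = -(κ*t) + κ*t₀ by ring]
      rw [Real.exp_add, Real.exp_add]
      rw [← ha', ← hb', div_mul_div_comm, mul_comm κ 2]
      congr 1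
      ring
  · -- P = 0 : exponential
    intro hP
    have hab0 : a * b = 0 := by rw [hab, hP]; simp
    rcases mul_eq_zero.mp hab0 with ha0 | hb0
    · -- a = 0, v = -b e^{-κ t} / (2κ), ε = -1
      have hbneg : b < 0 := by
        rcases lt_trichotomy b 0 with h | h | h
        · exact h
        · exfalso; rw [ha0, h] at hposab; simp at hposab
        · exfalso
          have h2 : 0 < b * Real.exp (-(κ * t₁)) := mul_pos h (Real.exp_pos _)
          rw [ha0] at hposab
          simp at hposab
          linarith
      refine ⟨-b / (2*κ), -1, div_pos (by linarith) (by positivity), Or.inr rfl, ?_⟩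
      intro t ht
      rw [hvf t ht, ha0]
      rw [show (-1:ℝ) * κ * t = -(κ * t) by ring]
      field_simp
      ring
    · -- b = 0, v = a e^{κ t} / (2κ), ε = 1
      have hapos : 0 < a := by
        rcases lt_trichotomy a 0 with h | h | h
        · exfalso
          have h1 : a * Real.exp (κ * t₁) < 0 :=
            mul_neg_of_neg_of_pos h (Real.exp_pos _)
          rw [hb0] at hposab
          simp at hposab
          linarith
        · exfalso; rw [hb0, h] at hposab; simp at hposab
        · exact h
      refine ⟨a / (2*κ), 1, div_pos hapos (by positivity), Or.inl rfl, ?_⟩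
      intro t ht
      rw [hvf t ht, hb0]
      rw [show (1:ℝ) * κ * t = κ * t by ring]
      field_simp
      ring
  · -- P < 0 : cosh
    intro hP
    have hC : 0 < -P / (n-2) := div_pos (by linarith) hn2
    have hsC : 0 < Real.sqrt (-P / (n-2)) := Real.sqrt_pos.mpr hC
    have hsC2 : Real.sqrt (-P / (n-2)) ^ 2 = -P / (n-2) := Real.sq_sqrt hC.le
    have habneg : a * b < 0 := by rw [hab]; exact div_neg_of_neg_of_pos hP hn2
    have hbneg : b < 0 := by
      rcases lt_trichotomy b 0 with h | h | h
      · exact h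
      · exfalso; rw [h] at habneg; simp at habneg
      · exfalso
        have haneg : a < 0 := by
          by_contra h'
          push_neg at h'
          have := mul_nonneg h' h.le
          nlinarith
        have h1 : a * Real.exp (κ * t₁) < 0 :=
          mul_neg_of_neg_of_pos haneg (Real.exp_pos _)
        have h2 : 0 < b * Real.exp (-(κ * t₁)) := mul_pos h (Real.exp_pos _)
        linarith
    have hapos : 0 < a := by
      by_contra h
      push_neg at h
      have := mul_nonneg (neg_nonneg.mpr h) (neg_nonneg.mpr hbneg.le)
      nlinarith
    refine ⟨Real.log (-b / Real.sqrt (-P / (n-2))) / κ, ?_⟩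
    intro t ht
    rw [hvf t ht]
    set t₀ := Real.log (-b / Real.sqrt (-P / (n-2))) / κ
    have het₀ : Real.exp (κ * t₀) = -b / Real.sqrt (-P / (n-2)) := by
      rw [show κ * t₀ = Real.log (-b / Real.sqrt (-P / (n-2))) by simp only [t₀]; field_simp]
      exact Real.exp_log (div_pos (by linarith) hsC)
    have hb' : Real.sqrt (-P / (n-2)) * Real.exp (κ * t₀) = -b := by
      rw [het₀]; exact mul_div_cancel₀ (-b) hsC.ne'
    have key : a * Real.exp (κ * t₀) = Real.sqrt (-P / (n-2)) := by
      rw [het₀, show a * (-b / Real.sqrt (-P / (n-2)))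
          = (a * -b) / Real.sqrt (-P / (n-2)) by ring, div_eq_iff hsC.ne']
      linear_combination -Real.mul_self_sqrt hC.le - hab
    have ha' : Real.sqrt (-P / (n-2)) * Real.exp (-(κ * t₀)) = a := by
      rw [← key, mul_assoc, ← Real.exp_add]; simp
    rw [Real.cosh_eq]
    rw [show κ * (t - t₀) = κ*t + -(κ*t₀) by ring]
    rw [show -(κ*t + -(κ*t₀)) = -(κ*t) + κ*t₀ by ring]
    rw [Real.exp_add, Real.exp_add]
    rw [← ha', show b = -(Real.sqrt (-P / (n-2)) * Real.exp (κ * t₀)) by rw [hb']; ring,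
      div_mul_div_comm, mul_comm κ 2]
    congr 1
    ring
end

section
/- Let ω ≠ 0 and A ∈ ℝ, let I ⊆ ℝ be a nonempty open interval such that A + ω·r > 0 for all r ∈ I, and let σ : I → ℝ be differentiable with σ(r) ≠ ω/2 and σ'(r) = (σ(r) − ω/2)² / (A + ω·r) for all r ∈ I. Then there exists a constant C > 0 such that for all r ∈ I one has log(C·(A + ω·r)) ≠ 0 and σ(r) = ω/2 − ω / log(C·(A + ω·r)). -/
lemma stmt_5_aux (x d w : ℝ) (hx : x ≠ 0) (hd : d ≠ 0) :
    (0 * x - w * (x ^ 2 / d)) / x ^ 2 = -(w / d) := by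
  field_simp
  ring

/-- Explicit integration of the separable ODE `σ' = (σ − ω/2)²/(A + ω·r)`
(the case `B = 0`): every solution with `σ ≠ ω/2` has the form
`σ(r) = ω/2 − ω/log(C·(A + ω·r))` for some constant `C > 0`. -/
theorem stmt_5 (ω A : ℝ) (hω : ω ≠ 0)
    (I : Set ℝ) (hI_open : IsOpen I) (hI_ne : I.Nonempty)
    (hI_conn : I.OrdConnected)
    (hIpos : ∀ r ∈ I, 0 < A + ω * r)
    (σ : ℝ → ℝ)
    (hσne : ∀ r ∈ I, σ r ≠ ω / 2)
    (hode : ∀ r ∈ I, HasDerivAt σ ((σ r - ω / 2) ^ 2 / (A + ω * r)) r) :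
    ∃ C : ℝ, 0 < C ∧ ∀ r ∈ I,
      Real.log (C * (A + ω * r)) ≠ 0 ∧
      σ r = ω / 2 - ω / Real.log (C * (A + ω * r)) := by
  set g : ℝ → ℝ := fun r => ω / (σ r - ω / 2) + Real.log (A + ω * r) with hg
  have hconv : Convex ℝ I := convex_iff_ordConnected.2 hI_conn
  have hgderiv : ∀ r ∈ I, HasDerivAt g 0 r := by
    intro r hr
    have hpos := hIpos r hr
    have hne : σ r - ω / 2 ≠ 0 := sub_ne_zero.2 (hσne r hr)
    have h1 : HasDerivAt (fun r => ω / (σ r - ω / 2)) (-(ω / (A + ω * r))) r := by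
      have h := (hasDerivAt_const r ω).div ((hode r hr).sub_const (ω / 2)) hne
      rwa [stmt_5_aux _ _ _ hne hpos.ne'] at h
    have h2 : HasDerivAt (fun r => A + ω * r) ω r := by
      simpa using ((hasDerivAt_id r).const_mul ω).const_add A
    have h3 : HasDerivAt (fun r => Real.log (A + ω * r)) (ω / (A + ω * r)) r :=
      h2.log hpos.ne'
    have := h1.add h3
    refine this.congr_deriv ?_
    ring
  obtain ⟨r₀, hr₀⟩ := hI_ne
  have hconst : ∀ r ∈ I, g r = g r₀ := by
    intro r hr
    refine hconv.is_const_of_fderivWithin_eq_zero (𝕜 := ℝ) (f := g)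
      (fun x hx => (hgderiv x hx).differentiableAt.differentiableWithinAt)
      (fun x hx => ?_) hr hr₀
    rw [fderivWithin_of_isOpen hI_open hx, (hgderiv x hx).hasFDerivAt.fderiv]
    ext
    simp
  refine ⟨Real.exp (-(g r₀)), Real.exp_pos _, fun r hr => ?_⟩
  have hpos := hIpos r hr
  have hne : σ r - ω / 2 ≠ 0 := sub_ne_zero.2 (hσne r hr)
  have hL : Real.log (Real.exp (-(g r₀)) * (A + ω * r))
      = -(g r₀) + Real.log (A + ω * r) := by
    rw [Real.log_mul (Real.exp_ne_zero _) hpos.ne', Real.log_exp]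
  have hgr : g r = g r₀ := hconst r hr
  have hkey : ω / (σ r - ω / 2) + Real.log (A + ω * r) = g r₀ := by
    rw [← hgr]
  have hLval : Real.log (Real.exp (-(g r₀)) * (A + ω * r))
      = -(ω / (σ r - ω / 2)) := by
    rw [hL]; linarith
  have hLne : Real.log (Real.exp (-(g r₀)) * (A + ω * r)) ≠ 0 := by
    rw [hLval]
    simp only [ne_eq, neg_eq_zero, div_eq_zero_iff]
    push_neg
    exact ⟨hω, hne⟩
  refine ⟨hLne, ?_⟩
  rw [hLval]
  field_simp
  ring
end

section
/- Let ω ≠ 0, A ∈ ℝ, and B > 0, let I ⊆ ℝ be a nonempty open interval such that A + ω·r > 0 for all r ∈ I, and let σ : I → ℝ be differentiable with σ'(r) = (B + (σ(r) − ω/2)²) / (A + ω·r) for all r ∈ I. Then there exists a constant C > 0 such that for all r ∈ I one has (√B/ω)·log(C·(A + ω·r)) ∈ (−π/2, π/2) and σ(r) = ω/2 + √B·tan((√B/ω)·log(C·(A + ω·r))). -/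
/-- Explicit integration of the separable ODE
`σ' = (B + (σ − ω/2)²)/(A + ω·r)` in the case `B > 0`: every solution has
the form `σ(r) = ω/2 + √B·tan((√B/ω)·log(C·(A + ω·r)))` for some `C > 0`,
with the argument of `tan` staying in `(−π/2, π/2)`. -/
theorem stmt_6 (ω A B : ℝ) (hω : ω ≠ 0) (hB : 0 < B)
    (I : Set ℝ) (hI_open : IsOpen I) (hI_ne : I.Nonempty)
    (hI_conn : I.OrdConnected)
    (hIpos : ∀ r ∈ I, 0 < A + ω * r)
    (σ : ℝ → ℝ)
    (hode : ∀ r ∈ I,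
      HasDerivAt σ ((B + (σ r - ω / 2) ^ 2) / (A + ω * r)) r) :
    ∃ C : ℝ, 0 < C ∧ ∀ r ∈ I,
      (Real.sqrt B / ω) * Real.log (C * (A + ω * r)) ∈
        Set.Ioo (-(Real.pi / 2)) (Real.pi / 2) ∧
      σ r = ω / 2 +
        Real.sqrt B * Real.tan ((Real.sqrt B / ω) * Real.log (C * (A + ω * r))) := by
  have hsB : 0 < Real.sqrt B := Real.sqrt_pos.mpr hB
  have hsqB : Real.sqrt B ^ 2 = B := Real.sq_sqrt hB.le
  set f : ℝ → ℝ := fun r =>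
    Real.arctan ((σ r - ω / 2) / Real.sqrt B) - Real.sqrt B / ω * Real.log (A + ω * r)
    with hf_def
  have hf : ∀ r ∈ I, HasDerivAt f 0 r := by
    intro r hr
    have hA : 0 < A + ω * r := hIpos r hr
    have h1 : HasDerivAt (fun r => (σ r - ω / 2) / Real.sqrt B)
        ((B + (σ r - ω / 2) ^ 2) / (A + ω * r) / Real.sqrt B) r :=
      ((hode r hr).sub_const _).div_const _
    have h2 : HasDerivAt (fun r => Real.arctan ((σ r - ω / 2) / Real.sqrt B))
        (1 / (1 + ((σ r - ω / 2) / Real.sqrt B) ^ 2) *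
          ((B + (σ r - ω / 2) ^ 2) / (A + ω * r) / Real.sqrt B)) r :=
      (Real.hasDerivAt_arctan _).comp r h1
    have hlin : HasDerivAt (fun r : ℝ => A + ω * r) ω r := by
      simpa using ((hasDerivAt_id r).const_mul ω).const_add A
    have h3 : HasDerivAt (fun r => Real.sqrt B / ω * Real.log (A + ω * r))
        (Real.sqrt B / ω * ((A + ω * r)⁻¹ * ω)) r :=
      ((Real.hasDerivAt_log hA.ne').comp r hlin).const_mul _
    have := h2.sub h3
    refine (show HasDerivAt f _ r from this).congr_deriv ?_
    symm
    have hden : (1 : ℝ) + ((σ r - ω / 2) / Real.sqrt B) ^ 2 ≠ 0 := by positivity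
    field_simp
    linear_combination (4 * Real.sqrt B) * hsqB
  have hconv : Convex ℝ I := convex_iff_ordConnected.mpr hI_conn
  obtain ⟨r₀, hr₀⟩ := hI_ne
  have hconst : ∀ r ∈ I, f r = f r₀ := by
    intro r hr
    exact hconv.is_const_of_fderivWithin_eq_zero
      (fun x hx => (hf x hx).differentiableAt.differentiableWithinAt)
      (fun x hx => by
        rw [fderivWithin_of_isOpen hI_open hx, (hf x hx).hasFDerivAt.fderiv]
        ext; simp) hr hr₀
  refine ⟨Real.exp (ω * f r₀ / Real.sqrt B), Real.exp_pos _, fun r hr => ?_⟩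
  have hA : 0 < A + ω * r := hIpos r hr
  have hlog : Real.sqrt B / ω *
      Real.log (Real.exp (ω * f r₀ / Real.sqrt B) * (A + ω * r)) =
      Real.arctan ((σ r - ω / 2) / Real.sqrt B) := by
    rw [Real.log_mul (Real.exp_pos _).ne' hA.ne', Real.log_exp, ← hconst r hr]
    simp only [hf_def]
    field_simp
    ring
  rw [hlog]
  refine ⟨Real.arctan_mem_Ioo _, ?_⟩
  rw [Real.tan_arctan]
  field_simp
  ring
end

section
/- Let n ≥ 3 be an integer, let C > 0 and c ∈ ℝ, and set a = (2(c+1) − n) / (2(n−2)). Then: (i) the function r ↦ r^a / log(C·r) is not Lebesgue integrable on the interval (1/C, 2/C); and (ii) the function r ↦ r^a / log(C·r) is Lebesgue integrable on the interval (2/C, ∞) if and only if c < −(n−2)/2. -/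
open MeasureTheory Set Filter Real Asymptotics
open scoped Topology

/-- derivative of `log (log (C x))` -/
lemma aux_hasDerivAt {C : ℝ} (hC : 0 < C) {x : ℝ} (hx : 0 < x) (hx1 : C * x ≠ 1) :
    HasDerivAt (fun y : ℝ => Real.log (Real.log (C * y)))
      ((x * Real.log (C * x))⁻¹) x := by
  have h1 : HasDerivAt (fun y : ℝ => C * y) C x := by
    simpa using (hasDerivAt_id x).const_mul C
  have h2 : HasDerivAt (fun y : ℝ => Real.log (C * y)) (C / (C * x)) x :=
    h1.log (by positivity)
  have h3 : Real.log (C * x) ≠ 0 :=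
    Real.log_ne_zero_of_pos_of_ne_one (by positivity) hx1
  have := h2.log h3
  convert this using 1
  field_simp

/-- Non-integrability near `1/C`. -/
lemma aux_not_int_left {C a : ℝ} (hC : 0 < C) :
    ¬ MeasureTheory.IntegrableOn
        (fun r : ℝ => r ^ a / Real.log (C * r)) (Set.Ioo (1 / C) (2 / C)) := by
  set l : Filter ℝ := 𝓝[>] (1 / C)
  have hCpos : (0:ℝ) < 1 / C := by positivity
  have hmem : ∀ᶠ x in l, x ∈ Ioo (1/C) (2/C) := by
    have : Ioo (1/C) (2/C) ∈ l := Ioo_mem_nhdsGT_of_mem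
      ⟨le_refl _, by rw [div_lt_div_iff₀ hC hC]; nlinarith⟩
    exact this
  have hbasic : ∀ᶠ x in l, 0 < x ∧ 1 < C * x := by
    filter_upwards [hmem] with x hx
    exact ⟨lt_trans hCpos hx.1, by rw [← div_lt_iff₀' hC]; exact hx.1⟩
  -- f = log log (Cx)
  have hd : ∀ᶠ x in l, HasDerivAt (fun y : ℝ => Real.log (Real.log (C * y)))
      ((x * Real.log (C * x))⁻¹) x := by
    filter_upwards [hbasic] with x hx
    exact aux_hasDerivAt hC hx.1 (ne_of_gt hx.2)
  -- tendsto atTop of the norm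
  have hCx : Tendsto (fun x : ℝ => C * x) l (𝓝[>] 1) := by
    apply tendsto_nhdsWithin_of_tendsto_nhds_of_eventually_within
    · have : Tendsto (fun x : ℝ => C * x) (𝓝 (1/C)) (𝓝 (C * (1/C))) :=
        (continuous_const.mul continuous_id).tendsto _
      rw [mul_one_div_cancel (ne_of_gt hC)] at this
      exact this.mono_left nhdsWithin_le_nhds
    · filter_upwards [hbasic] with x hx using hx.2
  have hlog : Tendsto (fun x : ℝ => Real.log (C * x)) l (𝓝[>] 0) := by
    apply tendsto_nhdsWithin_of_tendsto_nhds_of_eventually_within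
    · have : Tendsto Real.log (𝓝 1) (𝓝 0) := by
        simpa using (Real.continuousAt_log one_ne_zero).tendsto
      exact this.comp (hCx.mono_right nhdsWithin_le_nhds)
    · filter_upwards [hbasic] with x hx using Real.log_pos hx.2
  have hf : Tendsto (fun x : ℝ => ‖Real.log (Real.log (C * x))‖) l atTop := by
    have h1 : Tendsto (fun x : ℝ => Real.log (Real.log (C * x))) l atBot :=
      Real.tendsto_log_nhdsGT_zero.comp hlog
    have := tendsto_abs_atBot_atTop.comp h1
    simpa [Real.norm_eq_abs, Function.comp_def] using this
  -- big O
  have hO : (fun x : ℝ => (x * Real.log (C * x))⁻¹) =O[l]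
      (fun r : ℝ => r ^ a / Real.log (C * r)) := by
    have hbd : Tendsto (fun x : ℝ => x ^ (-1 - a)) l (𝓝 ((1/C) ^ (-1 - a))) := by
      have : ContinuousAt (fun x : ℝ => x ^ (-1 - a)) (1/C) :=
        Real.continuousAt_rpow_const _ _ (Or.inl (ne_of_gt hCpos))
      exact this.tendsto.mono_left nhdsWithin_le_nhds
    have h1 : (fun x : ℝ => x ^ (-1 - a) * (x ^ a / Real.log (C * x))) =O[l]
        (fun r : ℝ => r ^ a / Real.log (C * r)) := by
      simpa using (hbd.isBigO_one ℝ).mul (isBigO_refl (fun r : ℝ => r ^ a / Real.log (C * r)) l)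
    apply Filter.EventuallyEq.trans_isBigO _ h1
    filter_upwards [hbasic] with x hx
    have hx0 : (0:ℝ) < x := hx.1
    have hlx : Real.log (C * x) ≠ 0 := ne_of_gt (Real.log_pos hx.2)
    rw [mul_div_assoc']
    rw [← Real.rpow_add hx0]
    rw [show (-1 - a) + a = -1 by ring, Real.rpow_neg_one]
    field_simp
  have hd' : ∀ᶠ x in l, DifferentiableAt ℝ (fun y : ℝ => Real.log (Real.log (C * y))) x := by
    filter_upwards [hd] with x hx using hx.differentiableAt
  have hderiv : deriv (fun y : ℝ => Real.log (Real.log (C * y))) =ᶠ[l]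
      (fun x : ℝ => (x * Real.log (C * x))⁻¹) := by
    filter_upwards [hd] with x hx using hx.deriv
  exact not_integrableOn_of_tendsto_norm_atTop_of_deriv_isBigO_filter l
    (Ioo_mem_nhdsGT_of_mem ⟨le_refl _, by rw [div_lt_div_iff₀ hC hC]; nlinarith⟩)
    hd' hf (hderiv.trans_isBigO hO)

/-- Non-integrability at infinity when `a ≥ -1`. -/
lemma aux_not_int_right {C a : ℝ} (hC : 0 < C) (hA : -1 ≤ a) :
    ¬ MeasureTheory.IntegrableOn
        (fun r : ℝ => r ^ a / Real.log (C * r)) (Set.Ioi (2 / C)) := by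
  have hbasic : ∀ᶠ x in atTop, 1 ≤ x ∧ 1 < C * x := by
    filter_upwards [Filter.eventually_ge_atTop (max 1 (2/C))] with x hx
    refine ⟨le_trans (le_max_left _ _) hx, ?_⟩
    have h2 : 2/C ≤ x := le_trans (le_max_right _ _) hx
    have : 2 ≤ C * x := by rw [div_le_iff₀ hC] at h2; linarith [h2]
    linarith
  have hd : ∀ᶠ x in atTop, HasDerivAt (fun y : ℝ => Real.log (Real.log (C * y)))
      ((x * Real.log (C * x))⁻¹) x := by
    filter_upwards [hbasic] with x hx
    exact aux_hasDerivAt hC (by linarith [hx.1]) (ne_of_gt hx.2)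
  have hCx : Tendsto (fun x : ℝ => C * x) atTop atTop :=
    Tendsto.const_mul_atTop hC tendsto_id
  have hf : Tendsto (fun x : ℝ => ‖Real.log (Real.log (C * x))‖) atTop atTop := by
    have h1 : Tendsto (fun x : ℝ => Real.log (Real.log (C * x))) atTop atTop :=
      Real.tendsto_log_atTop.comp (Real.tendsto_log_atTop.comp hCx)
    exact tendsto_norm_atTop_atTop.comp h1
  have hO : (fun x : ℝ => (x * Real.log (C * x))⁻¹) =O[atTop]
      (fun r : ℝ => r ^ a / Real.log (C * r)) := by
    rw [isBigO_iff]
    refine ⟨1, ?_⟩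
    filter_upwards [hbasic] with x hx
    have hx0 : (0:ℝ) < x := by linarith [hx.1]
    have hlx : 0 < Real.log (C * x) := Real.log_pos hx.2
    have heq : (x * Real.log (C * x))⁻¹ = x ^ (-1 - a) * (x ^ a / Real.log (C * x)) := by
      rw [mul_div_assoc', ← Real.rpow_add hx0,
        show (-1 - a) + a = -1 by ring, Real.rpow_neg_one]
      field_simp
    rw [heq, one_mul, norm_mul]
    have hle : ‖x ^ (-1 - a)‖ ≤ 1 := by
      rw [Real.norm_eq_abs, abs_of_nonneg (Real.rpow_nonneg (le_of_lt hx0) _)]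
      exact Real.rpow_le_one_of_one_le_of_nonpos hx.1 (by linarith)
    calc ‖x ^ (-1 - a)‖ * ‖x ^ a / Real.log (C * x)‖
        ≤ 1 * ‖x ^ a / Real.log (C * x)‖ := by
          exact mul_le_mul_of_nonneg_right hle (norm_nonneg _)
      _ = ‖x ^ a / Real.log (C * x)‖ := one_mul _
  have hd' : ∀ᶠ x in atTop, DifferentiableAt ℝ (fun y : ℝ => Real.log (Real.log (C * y))) x := by
    filter_upwards [hd] with x hx using hx.differentiableAt
  have hderiv : deriv (fun y : ℝ => Real.log (Real.log (C * y))) =ᶠ[atTop]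
      (fun x : ℝ => (x * Real.log (C * x))⁻¹) := by
    filter_upwards [hd] with x hx using hx.deriv
  exact not_integrableOn_of_tendsto_norm_atTop_of_deriv_isBigO_filter atTop
    (Ioi_mem_atTop (2/C)) hd' hf (hderiv.trans_isBigO hO)

/-- Integrability at infinity when `a < -1`. -/
lemma aux_int_right {C a : ℝ} (hC : 0 < C) (hA : a < -1) :
    MeasureTheory.IntegrableOn
        (fun r : ℝ => r ^ a / Real.log (C * r)) (Set.Ioi (2 / C)) := by
  have ht : (0:ℝ) < 2 / C := by positivity
  have hmeas : AEStronglyMeasurable (fun r : ℝ => r ^ a / Real.log (C * r))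
      (volume.restrict (Ioi (2/C))) := by
    apply ContinuousOn.aestronglyMeasurable _ measurableSet_Ioi
    intro x hx
    have hx0 : (0:ℝ) < x := lt_trans ht hx
    have hx2 : (2:ℝ) < C * x := by
      have := (div_lt_iff₀' hC).mp hx; linarith
    apply ContinuousAt.continuousWithinAt
    exact (Real.continuousAt_rpow_const _ _ (Or.inl (ne_of_gt hx0))).div
      ((Real.continuousAt_log (by positivity)).comp (continuous_const.mul continuous_id).continuousAt)
      (ne_of_gt (Real.log_pos (by linarith)))
  have hint : Integrable (fun x : ℝ => (Real.log 2)⁻¹ * x ^ a)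
      (volume.restrict (Ioi (2/C))) :=
    (integrableOn_Ioi_rpow_of_lt hA ht).const_mul _
  apply hint.mono' hmeas
  filter_upwards [ae_restrict_mem measurableSet_Ioi] with x hx
  have hx0 : (0:ℝ) < x := lt_trans ht hx
  have hx2 : (2:ℝ) ≤ C * x := by
    have := (div_lt_iff₀' hC).mp hx; linarith
  have hlog2 : (0:ℝ) < Real.log 2 := Real.log_pos one_lt_two
  have hlog : Real.log 2 ≤ Real.log (C * x) := Real.log_le_log two_pos hx2
  have hxa : (0:ℝ) < x ^ a := Real.rpow_pos_of_pos hx0 _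
  rw [Real.norm_eq_abs, abs_of_nonneg (div_nonneg hxa.le (by linarith))]
  rw [div_le_iff₀ (by linarith)]
  calc x ^ a = (Real.log 2)⁻¹ * x ^ a * Real.log 2 := by field_simp
    _ ≤ (Real.log 2)⁻¹ * x ^ a * Real.log (C * x) := by
        apply mul_le_mul_of_nonneg_left hlog (by positivity)

/-- With `a = (2(c+1) − n)/(2(n−2))`: the function `r ↦ r^a / log(C·r)`
is not Lebesgue integrable on `(1/C, 2/C)`, and it is Lebesgue integrable
on `(2/C, ∞)` iff `c < −(n−2)/2`. -/
theorem stmt_7 (n : ℕ) (hn : 3 ≤ n) (C c : ℝ) (hC : 0 < C)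
    (a : ℝ) (ha : a = (2 * (c + 1) - n) / (2 * (n - 2))) :
    ¬ MeasureTheory.IntegrableOn
        (fun r : ℝ => r ^ a / Real.log (C * r)) (Set.Ioo (1 / C) (2 / C)) ∧
    (MeasureTheory.IntegrableOn
        (fun r : ℝ => r ^ a / Real.log (C * r)) (Set.Ioi (2 / C)) ↔
      c < -(n - 2) / 2) := by
  have hn3 : (3:ℝ) ≤ (n:ℝ) := by exact_mod_cast hn
  have hn2 : (0:ℝ) < (n:ℝ) - 2 := by linarith
  have key : a < -1 ↔ c < -((n:ℝ) - 2) / 2 := by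
    rw [ha, div_lt_iff₀ (by positivity)]
    constructor <;> intro h <;> linarith
  refine ⟨aux_not_int_left hC, ?_⟩
  constructor
  · intro h
    by_contra hcon
    have : -1 ≤ a := by
      by_contra h2
      exact hcon (key.mp (by linarith [lt_of_not_ge h2]))
    exact aux_not_int_right hC this h
  · intro h
    exact aux_int_right hC (key.mpr h)
end

section
/- Let B > 0 and C > 0. Then the function r ↦ 1 / (cos(√B · log(C·r)) · √r) is not Lebesgue integrable on the interval (1/C, (1/C)·exp(π/(2√B))), and it is also not Lebesgue integrable on the interval ((1/C)·exp(−π/(2√B)), 1/C). -/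
open Real MeasureTheory Set Filter Asymptotics Topology

lemma aux_not_intervalIntegrable (B C : ℝ) (hB : 0 < B) (hC : 0 < C) {c : ℝ} (hc : 0 < c)
    (hcos : Real.cos (Real.sqrt B * Real.log (C * c)) = 0)
    {a b : ℝ} (hne : a ≠ b) (hmem : c ∈ Set.uIcc a b) :
    ¬ IntervalIntegrable
      (fun r : ℝ => 1 / (Real.cos (Real.sqrt B * Real.log (C * r)) * Real.sqrt r))
      volume a b := by
  set g : ℝ → ℝ := fun x => Real.sqrt B * Real.log (C * x) with hgdef
  have hCc : (0:ℝ) < C * c := mul_pos hC hc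
  have hsB : (0:ℝ) < Real.sqrt B := Real.sqrt_pos.mpr hB
  -- derivative of cos ∘ g at c
  have h1 : HasDerivAt (fun x : ℝ => C * x) C c := by
    simpa using (hasDerivAt_id c).const_mul C
  have h2 : HasDerivAt (fun x => Real.log (C * x)) ((C*c)⁻¹ * C) c :=
    (Real.hasDerivAt_log hCc.ne').comp c h1
  have h3 : HasDerivAt g (Real.sqrt B * ((C*c)⁻¹ * C)) c := h2.const_mul _
  have h4 : HasDerivAt (fun x => Real.cos (g x))
      (-Real.sin (g c) * (Real.sqrt B * ((C*c)⁻¹ * C))) c :=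
    (Real.hasDerivAt_cos (g c)).comp c h3
  -- cos (g x) = O(x - c)
  have hO1 : (fun x => Real.cos (g x)) =O[𝓝 c] (fun x => x - c) := by
    have := h4.isBigO_sub
    have hcos' : Real.cos (g c) = 0 := hcos
    simpa [hcos'] using this
  have hO2 : (fun x : ℝ => Real.sqrt x) =O[𝓝 c] (fun _ : ℝ => (1:ℝ)) :=
    Filter.Tendsto.isBigO_one (F := ℝ) (Real.continuous_sqrt.continuousAt (x := c))
  have hO : (fun x => Real.cos (g x) * Real.sqrt x) =O[𝓝[≠] c] (fun x => x - c) := by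
    have := hO1.mul hO2
    simpa using this.mono nhdsWithin_le_nhds
  -- eventual nonvanishing
  have gcont : ContinuousAt g c :=
    continuousAt_const.mul ((Real.continuousAt_log hCc.ne').comp
      (continuousAt_const.mul continuousAt_id))
  have ev1 : ∀ᶠ x in 𝓝[≠] c, (0:ℝ) < x :=
    nhdsWithin_le_nhds (eventually_gt_nhds hc)
  have ev2 : ∀ᶠ x in 𝓝[≠] c, |g x - g c| < Real.pi := by
    have : ∀ᶠ x in 𝓝 c, g x ∈ Metric.ball (g c) Real.pi :=
      gcont.tendsto.eventually (Metric.ball_mem_nhds (g c) Real.pi_pos)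
    exact nhdsWithin_le_nhds (this.mono fun x hx => by
      simpa [Real.dist_eq] using hx)
  have evne : ∀ᶠ x in 𝓝[≠] c, Real.cos (g x) * Real.sqrt x ≠ 0 := by
    filter_upwards [ev1, ev2, self_mem_nhdsWithin] with x hx0 hxd hxne
    refine mul_ne_zero ?_ (Real.sqrt_pos.mpr hx0).ne'
    intro h0
    obtain ⟨k, hk⟩ := Real.cos_eq_zero_iff.mp h0
    have hcos' : Real.cos (g c) = 0 := hcos
    obtain ⟨m, hm⟩ := Real.cos_eq_zero_iff.mp hcos'
    have hdiff : g x - g c = ((k - m : ℤ) : ℝ) * Real.pi := by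
      rw [hk, hm]; push_cast; ring
    have hkm : |((k - m : ℤ) : ℝ)| < 1 := by
      have hπ := Real.pi_pos
      rw [hdiff, abs_mul, abs_of_pos hπ] at hxd
      nlinarith [abs_nonneg ((k - m : ℤ) : ℝ)]
    have hkm0 : (k - m : ℤ) = 0 := by
      have h5 : |(k - m : ℤ)| < 1 := by exact_mod_cast hkm
      have h6 := abs_lt.mp h5
      omega
    have hgx : g x = g c := by
      have : g x - g c = 0 := by rw [hdiff, hkm0]; simp
      linarith
    have hlog : Real.log (C * x) = Real.log (C * c) :=
      mul_left_cancel₀ hsB.ne' hgx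
    have hx' : C * x = C * c :=
      Real.log_injOn_pos (mem_Ioi.mpr (mul_pos hC hx0)) (mem_Ioi.mpr hCc) hlog
    exact hxne (mul_left_cancel₀ hC.ne' hx')
  -- invert
  have hinv : (fun x => (x - c)⁻¹) =O[𝓝[≠] c]
      (fun x => (Real.cos (g x) * Real.sqrt x)⁻¹) := by
    have := hO.inv_rev (evne.mono fun x hx h => absurd h hx)
    simpa using this
  have := not_intervalIntegrable_of_sub_inv_isBigO_punctured hinv hne hmem
  simpa [one_div] using this

/-- For `B, C > 0`, the function `r ↦ 1/(cos(√B·log(C·r))·√r)` is not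
Lebesgue integrable on `(1/C, (1/C)·e^{π/(2√B)})` nor on
`((1/C)·e^{−π/(2√B)}, 1/C)`. -/
theorem stmt_9 (B C : ℝ) (hB : 0 < B) (hC : 0 < C) :
    ¬ MeasureTheory.IntegrableOn
        (fun r : ℝ => 1 / (Real.cos (Real.sqrt B * Real.log (C * r)) * Real.sqrt r))
        (Set.Ioo (1 / C) ((1 / C) * Real.exp (Real.pi / (2 * Real.sqrt B)))) ∧
    ¬ MeasureTheory.IntegrableOn
        (fun r : ℝ => 1 / (Real.cos (Real.sqrt B * Real.log (C * r)) * Real.sqrt r))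
        (Set.Ioo ((1 / C) * Real.exp (-(Real.pi / (2 * Real.sqrt B)))) (1 / C)) := by
  have hsB : (0:ℝ) < Real.sqrt B := Real.sqrt_pos.mpr hB
  have ht : (0:ℝ) < Real.pi / (2 * Real.sqrt B) := by positivity
  have hinvC : (0:ℝ) < 1 / C := by positivity
  have key : ∀ t : ℝ, Real.sqrt B * Real.log (C * ((1/C) * Real.exp t)) = Real.sqrt B * t := by
    intro t
    have : C * ((1/C) * Real.exp t) = Real.exp t := by field_simp
    rw [this, Real.log_exp]
  constructor
  · intro h
    have hab : (1:ℝ)/C < (1/C) * Real.exp (Real.pi / (2 * Real.sqrt B)) := by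
      nlinarith [Real.exp_zero ▸ Real.exp_lt_exp.mpr ht, Real.exp_pos (Real.pi / (2 * Real.sqrt B))]
    have hcos : Real.cos (Real.sqrt B *
        Real.log (C * ((1/C) * Real.exp (Real.pi / (2 * Real.sqrt B))))) = 0 := by
      rw [key]
      have : Real.sqrt B * (Real.pi / (2 * Real.sqrt B)) = Real.pi / 2 := by
        field_simp
      rw [this, Real.cos_pi_div_two]
    have h' := (integrableOn_Ioc_iff_integrableOn_Ioo).mpr h
    rw [← intervalIntegrable_iff_integrableOn_Ioc_of_le hab.le] at h'
    exact aux_not_intervalIntegrable B C hB hC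
      (by positivity) hcos hab.ne Set.right_mem_uIcc h'
  · intro h
    have hab : (1/C) * Real.exp (-(Real.pi / (2 * Real.sqrt B))) < 1/C := by
      nlinarith [Real.exp_zero ▸ Real.exp_lt_exp.mpr (neg_neg_iff_pos.mpr ht : -(Real.pi / (2 * Real.sqrt B)) < 0),
        Real.exp_pos (-(Real.pi / (2 * Real.sqrt B)))]
    have hcos : Real.cos (Real.sqrt B *
        Real.log (C * ((1/C) * Real.exp (-(Real.pi / (2 * Real.sqrt B)))))) = 0 := by
      rw [key]
      have : Real.sqrt B * (-(Real.pi / (2 * Real.sqrt B))) = -(Real.pi / 2) := by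
        field_simp
      rw [this, Real.cos_neg, Real.cos_pi_div_two]
    have h' := (integrableOn_Ioc_iff_integrableOn_Ioo).mpr h
    rw [← intervalIntegrable_iff_integrableOn_Ioc_of_le hab.le] at h'
    exact aux_not_intervalIntegrable B C hB hC
      (by positivity) hcos hab.ne Set.left_mem_uIcc h'
end

section
/- Let n ≥ 3 be an integer, let β > 0, C > 0, and c ∈ ℝ, and define f(r) = r^{c/(n−2)} · (C·r)^{β − 1/2} / ((C·r)^{2β} + 1) for r > 0. Then f is Lebesgue integrable on the interval (0, 1) or f is Lebesgue integrable on the interval (1, ∞). -/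
open MeasureTheory Set Real

lemma stmt_10_aux (a β C : ℝ) (hβ : 0 < β) (hC : 0 < C) :
    MeasureTheory.IntegrableOn
      (fun r : ℝ =>
        r ^ a * (C * r) ^ (β - 1 / 2) / ((C * r) ^ (2 * β) + 1))
      (Set.Ioo (0 : ℝ) 1) ∨
    MeasureTheory.IntegrableOn
      (fun r : ℝ =>
        r ^ a * (C * r) ^ (β - 1 / 2) / ((C * r) ^ (2 * β) + 1))
      (Set.Ioi (1 : ℝ)) := by
  have hmeas : Measurable (fun r : ℝ =>
      r ^ a * (C * r) ^ (β - 1 / 2) / ((C * r) ^ (2 * β) + 1)) := by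
    fun_prop
  rcases lt_or_ge a (β - 1/2) with hle | hgt
  · -- integrable at infinity
    right
    have hg : IntegrableOn (fun r : ℝ => C ^ (-β - 1/2) * r ^ (a - β - 1/2))
        (Set.Ioi (1:ℝ)) := by
      refine Integrable.const_mul ?_ _
      exact (integrableOn_Ioi_rpow_iff zero_lt_one).2 (by linarith)
    refine Integrable.mono' hg (hmeas.aestronglyMeasurable) ?_
    filter_upwards [ae_restrict_mem measurableSet_Ioi] with r hr
    have hr1 : (1:ℝ) < r := hr
    have hr0 : (0:ℝ) < r := lt_trans one_pos hr1
    have hCr : 0 < C * r := mul_pos hC hr0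
    have hnum : 0 ≤ r ^ a * (C * r) ^ (β - 1/2) :=
      mul_nonneg (rpow_nonneg hr0.le _) (rpow_nonneg hCr.le _)
    have hdpos : 0 < (C * r) ^ (2 * β) := rpow_pos_of_pos hCr _
    rw [Real.norm_eq_abs, abs_of_nonneg (div_nonneg hnum (by positivity))]
    calc r ^ a * (C * r) ^ (β - 1/2) / ((C * r) ^ (2 * β) + 1)
        ≤ r ^ a * (C * r) ^ (β - 1/2) / (C * r) ^ (2 * β) :=
          div_le_div_of_nonneg_left hnum hdpos (by linarith)
      _ = C ^ (-β - 1/2) * r ^ (a - β - 1/2) := by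
          rw [mul_div_assoc, ← Real.rpow_sub hCr,
            Real.mul_rpow hC.le hr0.le, ← mul_assoc, mul_comm (r ^ a),
            mul_assoc, ← Real.rpow_add hr0]
          ring_nf
  · -- integrable near 0
    left
    have hg : IntegrableOn (fun r : ℝ => C ^ (β - 1/2) * r ^ (a + (β - 1/2)))
        (Set.Ioo (0:ℝ) 1) := by
      refine Integrable.const_mul ?_ _
      have := intervalIntegral.intervalIntegrable_rpow'
        (r := a + (β - 1/2)) (by linarith) (a := 0) (b := 1)
      rw [intervalIntegrable_iff_integrableOn_Ioc_of_le zero_le_one] at this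
      exact this.mono_set Set.Ioo_subset_Ioc_self
    refine Integrable.mono' hg (hmeas.aestronglyMeasurable) ?_
    filter_upwards [ae_restrict_mem measurableSet_Ioo] with r hr
    have hr0 : (0:ℝ) < r := hr.1
    have hCr : 0 < C * r := mul_pos hC hr0
    have hnum : 0 ≤ r ^ a * (C * r) ^ (β - 1/2) :=
      mul_nonneg (rpow_nonneg hr0.le _) (rpow_nonneg hCr.le _)
    rw [Real.norm_eq_abs, abs_of_nonneg (div_nonneg hnum (by positivity))]
    calc r ^ a * (C * r) ^ (β - 1/2) / ((C * r) ^ (2 * β) + 1)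
        ≤ r ^ a * (C * r) ^ (β - 1/2) :=
          div_le_self hnum (by nlinarith [rpow_nonneg hCr.le (2*β)])
      _ = C ^ (β - 1/2) * r ^ (a + (β - 1/2)) := by
          rw [Real.mul_rpow hC.le hr0.le, ← mul_assoc, mul_comm (r ^ a),
            mul_assoc, ← Real.rpow_add hr0]

/-- For every `β > 0`, `C > 0`, `c ∈ ℝ` and `n ≥ 3`, the function
`f(r) = r^{c/(n−2)}·(C·r)^{β−1/2}/((C·r)^{2β} + 1)` is Lebesgue integrable
on `(0,1)` or on `(1,∞)` (so the corresponding arc length cannot diverge at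
both ends). -/
theorem stmt_10 (n : ℕ) (hn : 3 ≤ n) (β C c : ℝ) (hβ : 0 < β) (hC : 0 < C) :
    MeasureTheory.IntegrableOn
      (fun r : ℝ =>
        r ^ (c / (n - 2)) * (C * r) ^ (β - 1 / 2) / ((C * r) ^ (2 * β) + 1))
      (Set.Ioo (0 : ℝ) 1) ∨
    MeasureTheory.IntegrableOn
      (fun r : ℝ =>
        r ^ (c / (n - 2)) * (C * r) ^ (β - 1 / 2) / ((C * r) ^ (2 * β) + 1))
      (Set.Ioi (1 : ℝ)) := by
  exact stmt_10_aux (c / (n - 2)) β C hβ hC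
end

section
/- Let c ∈ ℝ and let w : ℝ → ℝ be twice differentiable with w''(t) = c·w(t) and w(t) > 0 for all t ∈ ℝ. Then c ≥ 0; if c = 0, then w is constant; and if c > 0, then, setting κ = √c, there exist constants a ≥ 0 and b ≥ 0, not both zero, such that w(t) = a·e^{κt} + b·e^{−κt} for all t ∈ ℝ. -/
private lemma const_of_hasDerivAt_zero {f : ℝ → ℝ} (h : ∀ t, HasDerivAt f 0 t) (s t : ℝ) :
    f s = f t :=
  is_const_of_deriv_eq_zero (fun x => (h x).differentiableAt) (fun x => (h x).deriv) s t

open Real Filter in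
/-- A positive solution `w` on all of `ℝ` of `w'' = c·w` forces `c ≥ 0`;
if `c = 0` then `w` is constant, and if `c > 0` then, with `κ = √c`,
`w(t) = a·e^{κt} + b·e^{−κt}` for some `a, b ≥ 0` not both zero. -/
theorem stmt_13 (c : ℝ) (w w' w'' : ℝ → ℝ)
    (hw' : ∀ t : ℝ, HasDerivAt w (w' t) t)
    (hw'' : ∀ t : ℝ, HasDerivAt w' (w'' t) t)
    (hode : ∀ t : ℝ, w'' t = c * w t)
    (hpos : ∀ t : ℝ, 0 < w t) :
    0 ≤ c ∧
      (c = 0 → ∀ s t : ℝ, w s = w t) ∧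
      (0 < c → ∃ a b : ℝ, 0 ≤ a ∧ 0 ≤ b ∧ ¬(a = 0 ∧ b = 0) ∧
        ∀ t : ℝ, w t = a * Real.exp (Real.sqrt c * t) +
          b * Real.exp (-(Real.sqrt c * t))) := by
  refine ⟨?_, ?_, ?_⟩
  · -- c ≥ 0
    by_contra hcn
    push_neg at hcn
    have hanti : StrictAnti w' := strictAnti_of_deriv_neg fun x => by
      rw [(hw'' x).deriv, hode]; exact mul_neg_of_neg_of_pos hcn (hpos x)
    have hz : ∀ t0 : ℝ, w' t0 = 0 := by
      intro t0
      rcases lt_trichotomy (w' t0) 0 with hk | hk | hk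
      · set t1 := t0 + (w t0 + 1) / (-w' t0) with ht1
        have hd : 0 < (w t0 + 1) / (-w' t0) := by
          apply div_pos (by linarith [hpos t0]) (by linarith)
        have hlt : t0 < t1 := by rw [ht1]; linarith
        obtain ⟨ξ, hξ, hslope⟩ := exists_hasDerivAt_eq_slope w w' hlt
          (fun x _ => (hw' x).continuousAt.continuousWithinAt) (fun x _ => hw' x)
        have h1 : w' ξ < w' t0 := hanti hξ.1
        have heq : w' ξ * (t1 - t0) = w t1 - w t0 := by
          rw [hslope, div_mul_cancel₀ _ (by intro h; rw [sub_eq_zero] at h; simp [h] at hlt)]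
        have hcan : (w t0 + 1) / (-w' t0) * (-w' t0) = w t0 + 1 :=
          div_mul_cancel₀ _ (by linarith)
        have hprod : (t1 - t0) * (-w' t0) = w t0 + 1 := by
          rw [show t1 - t0 = (w t0 + 1) / (-w' t0) by rw [ht1]; ring]; exact hcan
        nlinarith [hpos t1, hpos t0, mul_lt_mul_of_pos_right h1 (by linarith : (0:ℝ) < t1 - t0)]
      · exact hk
      · set t1 := t0 - (w t0 + 1) / (w' t0) with ht1
        have hd : 0 < (w t0 + 1) / (w' t0) := by
          apply div_pos (by linarith [hpos t0]) hk
        have hlt : t1 < t0 := by rw [ht1]; linarith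
        obtain ⟨ξ, hξ, hslope⟩ := exists_hasDerivAt_eq_slope w w' hlt
          (fun x _ => (hw' x).continuousAt.continuousWithinAt) (fun x _ => hw' x)
        have h1 : w' t0 < w' ξ := hanti hξ.2
        have heq : w' ξ * (t0 - t1) = w t0 - w t1 := by
          rw [hslope, div_mul_cancel₀ _ (by intro h; rw [sub_eq_zero] at h; simp [h] at hlt)]
        have hcan : (w t0 + 1) / (w' t0) * (w' t0) = w t0 + 1 :=
          div_mul_cancel₀ _ (by linarith)
        have hprod : (t0 - t1) * (w' t0) = w t0 + 1 := by
          rw [show t0 - t1 = (w t0 + 1) / (w' t0) by rw [ht1]; ring]; exact hcan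
        nlinarith [hpos t1, hpos t0, mul_lt_mul_of_pos_right h1 (by linarith : (0:ℝ) < t0 - t1)]
    have := hanti (show (0:ℝ) < 1 by norm_num)
    rw [hz 0, hz 1] at this
    exact lt_irrefl 0 this
  · -- c = 0 implies constant
    intro hc0
    have hk : ∀ t, w' t = w' 0 := fun t =>
      const_of_hasDerivAt_zero (fun s => by
        have h := hw'' s; rw [hode, hc0, zero_mul] at h; exact h) t 0
    have haff : ∀ t : ℝ, w t - w' 0 * t = w 0 := fun t => by
      have h0 : ∀ s : ℝ, HasDerivAt (fun u => w u - w' 0 * u) 0 s := fun s => by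
        have := (hw' s).sub ((hasDerivAt_id s).const_mul (w' 0))
        rw [mul_one] at this
        rw [hk s, sub_self] at this; exact this
      simpa using const_of_hasDerivAt_zero h0 t 0
    have hk0 : w' 0 = 0 := by
      rcases lt_trichotomy (w' 0) 0 with h | h | h
      · have ht := haff ((w 0 + 1) / (-w' 0))
        have hcan : w' 0 * ((w 0 + 1) / (-w' 0)) = -(w 0 + 1) := by
          rw [div_neg, mul_neg, mul_div_assoc', mul_comm, mul_div_assoc,
            div_self h.ne, mul_one]
        nlinarith [hpos ((w 0 + 1) / (-w' 0)), hpos 0]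
      · exact h
      · have ht := haff (-(w 0 + 1) / (w' 0))
        have hcan : w' 0 * (-(w 0 + 1) / (w' 0)) = -(w 0 + 1) := by
          rw [mul_div_assoc', mul_comm, mul_div_assoc, div_self h.ne', mul_one]
        nlinarith [hpos (-(w 0 + 1) / (w' 0)), hpos 0]
    intro s t
    have hs := haff s; have ht := haff t
    rw [hk0] at hs ht; linarith
  · -- c > 0 case
    intro hcp
    set κ := Real.sqrt c with hκdef
    have hκ : 0 < κ := Real.sqrt_pos.2 hcp
    have hκ2 : κ * κ = c := Real.mul_self_sqrt hcp.le
    set u0 : ℝ := w' 0 - κ * w 0 with hu0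
    -- Step A : (w' - κ w) * exp (κ t) is constant
    have hA : ∀ t : ℝ, (w' t - κ * w t) * Real.exp (κ * t) = u0 := by
      intro t
      have hconst := const_of_hasDerivAt_zero
        (f := fun t => (w' t - κ * w t) * Real.exp (κ * t)) (fun s => by
          have hE : HasDerivAt (fun t : ℝ => Real.exp (κ * t)) (Real.exp (κ * s) * (κ * 1)) s :=
            ((hasDerivAt_id s).const_mul κ).exp
          have := (((hw'' s).sub ((hw' s).const_mul κ)).mul hE)
          have hval : (w'' s - κ * w' s) * Real.exp (κ * s)
              + (w' s - κ * w s) * (Real.exp (κ * s) * (κ * 1)) = 0 := by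
            rw [hode, ← hκ2]; ring
          simp only [Pi.sub_apply] at this
          rwa [hval] at this) t 0
      simpa [hu0] using hconst
    -- Step B : w t * exp (-(κ t)) + (u0/(2κ)) * exp (-(2 κ t)) is constant
    set b : ℝ := -(u0 / (2 * κ)) with hbdef
    set a : ℝ := w 0 + u0 / (2 * κ) with hadef
    have hB : ∀ t : ℝ, w t * Real.exp (-(κ * t)) + (u0 / (2 * κ)) * Real.exp (-(2 * κ * t)) = a := by
      intro t
      have hconst := const_of_hasDerivAt_zero
        (f := fun t => w t * Real.exp (-(κ * t)) + (u0 / (2 * κ)) * Real.exp (-(2 * κ * t)))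
        (fun s => by
          have hE : HasDerivAt (fun t : ℝ => Real.exp (-(κ * t))) (Real.exp (-(κ * s)) * (-(κ * 1))) s :=
            (((hasDerivAt_id s).const_mul κ).neg).exp
          have hE2 : HasDerivAt (fun t : ℝ => Real.exp (-(2 * κ * t))) (Real.exp (-(2 * κ * s)) * (-(2 * κ * 1))) s :=
            (((hasDerivAt_id s).const_mul (2 * κ)).neg).exp
          have hd := ((hw' s).mul hE).add (hE2.const_mul (u0 / (2 * κ)))
          have hval : w' s * Real.exp (-(κ * s)) + w s * (Real.exp (-(κ * s)) * (-(κ * 1)))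
              + u0 / (2 * κ) * (Real.exp (-(2 * κ * s)) * (-(2 * κ * 1))) = 0 := by
            have h1 := hA s
            have he2 : Real.exp (-(2 * κ * s)) = Real.exp (-(κ * s)) * Real.exp (-(κ * s)) := by
              rw [← Real.exp_add]; ring_nf
            have hinv : Real.exp (-(κ * s)) = (Real.exp (κ * s))⁻¹ := Real.exp_neg _
            rw [he2, hinv]
            have hEi : Real.exp (κ * s) * (Real.exp (κ * s))⁻¹ = 1 := mul_inv_cancel₀ (Real.exp_pos _).ne'
            have hκi : κ * κ⁻¹ = 1 := mul_inv_cancel₀ hκ.ne'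
            linear_combination (-(w' s - κ * w s) * (Real.exp (κ * s))⁻¹) * hEi
              + (-(w' s - κ * w s) * (Real.exp (κ * s))⁻¹ * Real.exp (κ * s) * (Real.exp (κ * s))⁻¹) * hκi
              + ((Real.exp (κ * s))⁻¹ * (Real.exp (κ * s))⁻¹ * (κ * κ⁻¹)) * h1
          rwa [hval] at hd) t 0
      simpa [hadef] using hconst
    -- the formula
    clear_value u0 a b
    have hform : ∀ t : ℝ, w t = a * Real.exp (κ * t) + b * Real.exp (-(κ * t)) := by
      intro t
      have h := hB t
      have he2 : Real.exp (-(2 * κ * t)) = Real.exp (-(κ * t)) * Real.exp (-(κ * t)) := by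
        rw [← Real.exp_add]; ring_nf
      have h1 : Real.exp (κ * t) * Real.exp (-(κ * t)) = 1 := by
        rw [← Real.exp_add]; simp
      rw [he2] at h
      rw [hbdef]
      linear_combination Real.exp (κ * t) * h
        - (w t + u0 / (2 * κ) * Real.exp (-(κ * t))) * h1
    -- positivity of a
    have hlim1 : Tendsto (fun t : ℝ => a + b * Real.exp (-(2 * κ * t))) atTop (nhds a) := by
      have h2 : Tendsto (fun t : ℝ => 2 * κ * t) atTop atTop :=
        Tendsto.const_mul_atTop (by positivity) tendsto_id
      have := (Real.tendsto_exp_neg_atTop_nhds_zero.comp h2).const_mul b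
      simpa using tendsto_const_nhds.add this
    have ha : 0 ≤ a := by
      apply ge_of_tendsto' hlim1
      intro t
      have heq : a + b * Real.exp (-(2 * κ * t)) = w t * Real.exp (-(κ * t)) := by
        rw [hform t]
        have he2 : Real.exp (-(2 * κ * t)) = Real.exp (-(κ * t)) * Real.exp (-(κ * t)) := by
          rw [← Real.exp_add]; ring_nf
        have h1 : Real.exp (κ * t) * Real.exp (-(κ * t)) = 1 := by
          rw [← Real.exp_add]; simp
        linear_combination b * he2 - a * h1
      rw [heq]
      exact (mul_pos (hpos t) (Real.exp_pos _)).le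
    have hb : 0 ≤ b := by
      have hlim2 : Tendsto (fun t : ℝ => b + a * Real.exp (-(2 * κ * t))) atTop (nhds b) := by
        have h2 : Tendsto (fun t : ℝ => 2 * κ * t) atTop atTop :=
          Tendsto.const_mul_atTop (by positivity) tendsto_id
        have := (Real.tendsto_exp_neg_atTop_nhds_zero.comp h2).const_mul a
        simpa using tendsto_const_nhds.add this
      apply ge_of_tendsto' hlim2
      intro t
      have heq : b + a * Real.exp (-(2 * κ * t)) = w (-t) * Real.exp (-(κ * t)) := by
        rw [hform (-t)]
        have he2 : Real.exp (-(2 * κ * t)) = Real.exp (-(κ * t)) * Real.exp (-(κ * t)) := by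
          rw [← Real.exp_add]; ring_nf
        have h1 : Real.exp (κ * -t) * Real.exp (-(κ * -t)) = 1 := by
          rw [← Real.exp_add]; simp
        have h3 : Real.exp (κ * -t) = Real.exp (-(κ * t)) := by ring_nf
        have h4 : Real.exp (-(κ * -t)) = Real.exp (κ * t) := by ring_nf
        rw [h3, h4] at h1
        rw [h3, h4]
        linear_combination a * he2 - b * h1
      rw [heq]
      exact (mul_pos (hpos (-t)) (Real.exp_pos _)).le
    refine ⟨a, b, ha, hb, ?_, hform⟩
    rintro ⟨ha0, hb0⟩
    have h0 := hform 0
    simp [ha0, hb0] at h0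
    exact absurd h0 (hpos 0).ne'
end

section
/- Let n ≥ 3 be an integer, let λ₁ > 0 and C ∈ ℝ, and define u : ℝ → ℝ by u(s) = C + ∫₀^s exp(−λ₁·p²/(n−2)) dp. Then the function s ↦ (n−1)·(u(s)·u''(s) − u'(s)²) + λ₁·u(s)² + λ₁·s·u(s)·u'(s) is not constant on ℝ. -/
open Filter Real MeasureTheory Set intervalIntegral Topology

/-- For `u(s) = C + ∫₀^s e^{−λ₁·p²/(n−2)} dp` with `λ₁ > 0`, the would-be
soliton coefficient `(n−1)·(u·u'' − (u')²) + λ₁·u² + λ₁·s·u·u'` is not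
constant on `ℝ`. -/
theorem stmt_15 (n : ℕ) (hn : 3 ≤ n) (lam C : ℝ) (hlam : 0 < lam)
    (u : ℝ → ℝ)
    (hu : u = fun s : ℝ =>
      C + ∫ p in (0 : ℝ)..s, Real.exp (-lam * p ^ 2 / (n - 2))) :
    ¬ ∃ K : ℝ, ∀ s : ℝ,
      (n - 1) * (u s * deriv (deriv u) s - (deriv u s) ^ 2) +
        lam * (u s) ^ 2 + lam * s * u s * deriv u s = K := by
  rintro ⟨K, hK⟩
  have hn3 : (3 : ℝ) ≤ (n : ℝ) := by exact_mod_cast hn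
  have hdpos : (0 : ℝ) < (n : ℝ) - 2 := by linarith
  set a : ℝ := lam / ((n : ℝ) - 2) with hadef
  have ha : 0 < a := div_pos hlam hdpos
  set f : ℝ → ℝ := fun p => Real.exp (-a * p ^ 2) with hf
  have hfe : ∀ p : ℝ, Real.exp (-lam * p ^ 2 / ((n : ℝ) - 2)) = f p := by
    intro p
    rw [hf]
    congr 1
    field_simp [hadef]
    rw [hadef]; field_simp
  have hu' : u = fun s => C + ∫ p in (0 : ℝ)..s, f p := by
    rw [hu]; funext s; congr 1
    exact intervalIntegral.integral_congr fun p _ => hfe p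
  have hcont : Continuous f := by
    rw [hf]; exact Real.continuous_exp.comp (by continuity)
  -- first derivative
  have hder : deriv u = f := by
    funext s
    rw [hu']
    exact (((hcont.integral_hasStrictDerivAt 0 s).hasDerivAt).const_add C).deriv
  -- second derivative
  have hfd : ∀ s : ℝ, HasDerivAt f (-(2 * a * s) * f s) s := by
    intro s
    have h1 : HasDerivAt (fun s : ℝ => -a * s ^ 2) (-a * (2 * s)) s := by
      simpa using ((hasDerivAt_pow 2 s).const_mul (-a))
    have := h1.exp
    convert this using 1
    rw [hf]; ring
  have hder2 : deriv f = fun s => -(2 * a * s) * f s := funext fun s => (hfd s).deriv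
  have hKs : ∀ s : ℝ, ((n : ℝ) - 1) * (u s * (-(2 * a * s) * f s) - (f s) ^ 2)
      + lam * (u s) ^ 2 + lam * s * u s * f s = K := by
    intro s
    have h := hK s
    rwa [hder, hder2] at h
  -- the Gaussian tail integral
  set L : ℝ := ∫ x in Set.Ioi (0 : ℝ), f x with hLdef
  have hLval : L = Real.sqrt (π / a) / 2 := integral_gaussian_Ioi a
  have hLpos : 0 < L := by
    rw [hLval]
    have : 0 < Real.sqrt (π / a) := Real.sqrt_pos.mpr (div_pos Real.pi_pos ha)
    linarith
  have hint : Integrable f := integrable_exp_neg_mul_sq ha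
  -- limits of u at ±∞
  have huTop : Tendsto u atTop (𝓝 (C + L)) := by
    rw [hu']
    exact tendsto_const_nhds.add
      (MeasureTheory.intervalIntegral_tendsto_integral_Ioi 0 hint.integrableOn tendsto_id)
  have hIic : (∫ x in Set.Iic (0 : ℝ), f x) = L := by
    have h := integral_comp_neg_Iic (0 : ℝ) f
    rw [neg_zero] at h
    rw [hLdef, ← h]
    refine integral_congr_ae (Eventually.of_forall fun x => ?_)
    rw [hf]; simp [neg_sq]
  have huBot : Tendsto u atBot (𝓝 (C - L)) := by
    rw [hu']
    have h := MeasureTheory.intervalIntegral_tendsto_integral_Iic 0 hint.integrableOn tendsto_id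
    rw [hIic] at h
    have h2 : Tendsto (fun s : ℝ => ∫ p in (0 : ℝ)..s, f p) atBot (𝓝 (-L)) := by
      have := h.neg
      refine this.congr fun s => ?_
      rw [id_eq, intervalIntegral.integral_symm s 0]
    have h3 : Tendsto (fun s : ℝ => C + ∫ p in (0 : ℝ)..s, f p) atBot (𝓝 (C + -L)) :=
      tendsto_const_nhds.add h2
    simpa [sub_eq_add_neg] using h3
  -- limits of f and s·f at ±∞
  have hq : Tendsto (fun s : ℝ => a * s ^ 2) atTop atTop :=
    (tendsto_pow_atTop two_ne_zero).const_mul_atTop ha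
  have hfTop : Tendsto f atTop (𝓝 0) := by
    have := Real.tendsto_exp_atBot.comp (tendsto_neg_atTop_atBot.comp hq)
    refine this.congr fun s => ?_
    rw [hf]; simp [Function.comp]
  have hg : Tendsto (fun s : ℝ => (a * s ^ 2) * Real.exp (-(a * s ^ 2))) atTop (𝓝 0) := by
    have := (Real.tendsto_pow_mul_exp_neg_atTop_nhds_zero 1).comp hq
    simpa [Function.comp_def] using this
  have hsf : Tendsto (fun s : ℝ => s * f s) atTop (𝓝 0) := by
    have hg' : Tendsto (fun s : ℝ => (1 / a) * ((a * s ^ 2) * Real.exp (-(a * s ^ 2))))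
        atTop (𝓝 0) := by simpa using hg.const_mul (1 / a)
    refine squeeze_zero' ?_ ?_ hg'
    · filter_upwards [eventually_ge_atTop (1 : ℝ)] with s hs
      have := Real.exp_pos (-a * s ^ 2)
      rw [hf]; positivity
    · filter_upwards [eventually_ge_atTop (1 : ℝ)] with s hs
      have h1 : s ≤ s ^ 2 := by nlinarith
      have h2 : (0 : ℝ) < Real.exp (-(a * s ^ 2)) := Real.exp_pos _
      have h3 : (1 / a) * ((a * s ^ 2) * Real.exp (-(a * s ^ 2)))
          = s ^ 2 * Real.exp (-(a * s ^ 2)) := by field_simp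
      simp only [hf, neg_mul]
      rw [h3]
      exact mul_le_mul_of_nonneg_right h1 h2.le
  have hneg : Tendsto (fun s : ℝ => -s) atBot atTop := tendsto_neg_atBot_atTop
  have hfBot : Tendsto f atBot (𝓝 0) := by
    have := hfTop.comp hneg
    refine this.congr fun s => ?_
    simp only [Function.comp, hf, neg_sq]
  have hsfBot : Tendsto (fun s : ℝ => s * f s) atBot (𝓝 0) := by
    have := (hsf.comp hneg).neg
    rw [neg_zero] at this
    refine this.congr fun s => ?_
    simp only [Function.comp, hf, neg_sq]
    ring
  -- the common limit computation
  have key : ∀ (M : ℝ) (l : Filter ℝ), Tendsto u l (𝓝 M) → Tendsto f l (𝓝 0) →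
      Tendsto (fun s => s * f s) l (𝓝 0) →
      Tendsto (fun s => ((n : ℝ) - 1) * (u s * (-(2 * a * s) * f s) - (f s) ^ 2)
        + lam * (u s) ^ 2 + lam * s * u s * f s) l (𝓝 (lam * M ^ 2)) := by
    intro M l hul hf0 hsf0
    have h1 : Tendsto (fun s => u s * (-(2 * a) * (s * f s))) l (𝓝 (M * (-(2 * a) * 0))) :=
      hul.mul (hsf0.const_mul _)
    have h2 : Tendsto (fun s => (f s) ^ 2) l (𝓝 (0 ^ 2)) := hf0.pow 2
    have h3 : Tendsto (fun s => lam * (u s) ^ 2) l (𝓝 (lam * M ^ 2)) :=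
      (hul.pow 2).const_mul lam
    have h4 : Tendsto (fun s => lam * (u s * (s * f s))) l (𝓝 (lam * (M * 0))) :=
      (hul.mul hsf0).const_mul lam
    have hall := (((h1.sub h2).const_mul ((n : ℝ) - 1)).add h3).add h4
    have hfun : (fun s => ((n : ℝ) - 1) * (u s * (-(2 * a * s) * f s) - (f s) ^ 2)
        + lam * (u s) ^ 2 + lam * s * u s * f s)
        = fun s => ((n : ℝ) - 1) * (u s * (-(2 * a) * (s * f s)) - (f s) ^ 2)
          + lam * (u s) ^ 2 + lam * (u s * (s * f s)) := by
      funext s; ring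
    have hval : lam * M ^ 2 = ((n : ℝ) - 1) * (M * (-(2 * a) * 0) - 0 ^ 2)
        + lam * M ^ 2 + lam * (M * 0) := by ring
    rw [hfun, hval]
    exact hall
  -- the expression is the constant K, so its limits equal K
  have hGconst : (fun s => ((n : ℝ) - 1) * (u s * (-(2 * a * s) * f s) - (f s) ^ 2)
      + lam * (u s) ^ 2 + lam * s * u s * f s) = fun _ => K := funext hKs
  have e1 : lam * (C + L) ^ 2 = K := by
    refine tendsto_nhds_unique (key _ _ huTop hfTop hsf) ?_
    rw [hGconst]; exact tendsto_const_nhds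
  have e2 : lam * (C - L) ^ 2 = K := by
    refine tendsto_nhds_unique (key _ _ huBot hfBot hsfBot) ?_
    rw [hGconst]; exact tendsto_const_nhds
  -- value at 0
  have hu0 : u 0 = C := by rw [hu']; simp
  have hf0 : f 0 = 1 := by rw [hf]; simp
  have e0 : lam * C ^ 2 - ((n : ℝ) - 1) = K := by
    have h := hKs 0
    rw [hu0, hf0] at h
    linarith [h]
  have hLL : 0 < lam * L ^ 2 := mul_pos hlam (pow_pos hLpos 2)
  nlinarith [e1, e2, e0, hLL]
end

section
/- Let n ≥ 3 be an integer, let κ > 0, A ≠ 0, and c ≠ 0, and let f : ℝ → ℝ be any differentiable function with f'(t) = c/(A·cosh(κ·t)) for all t ∈ ℝ. Then the function t ↦ exp(−2·f(t)/(n−2)) · ( −κ²·(n−1) − (1/(n−2))·( f''(t) + f'(t)² + κ·(n−1)·f'(t)·tanh(κ·t) ) ) is not constant on ℝ. -/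
/-- If `f' (t) = c/(A·cosh(κt))` with `κ > 0`, `A ≠ 0`, `c ≠ 0`, then the
would-be soliton coefficient
`e^{−2f/(n−2)}·(−κ²(n−1) − (1/(n−2))·(f'' + (f')² + κ(n−1)·f'·tanh(κt)))`
is not constant on `ℝ`. -/
theorem stmt_17 (n : ℕ) (hn : 3 ≤ n) (κ A c : ℝ) (hκ : 0 < κ)
    (hA : A ≠ 0) (hc : c ≠ 0)
    (f f' : ℝ → ℝ)
    (hf' : f' = fun t : ℝ => c / (A * Real.cosh (κ * t)))
    (hf : ∀ t : ℝ, HasDerivAt f (f' t) t) :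
    ¬ ∃ K : ℝ, ∀ t : ℝ,
      Real.exp (-2 * f t / (n - 2)) *
        (-(κ ^ 2) * (n - 1) - (1 / (n - 2)) *
          (deriv f' t + (f' t) ^ 2 +
            κ * (n - 1) * f' t * Real.tanh (κ * t))) = K := by
  rintro ⟨K, hK⟩
  set b : ℝ := c / A with hb
  have hbne : b ≠ 0 := div_ne_zero hc hA
  -- basic derivative of inner function κ * t at any point
  have hκt : ∀ t : ℝ, HasDerivAt (fun t : ℝ => κ * t) κ t := by
    intro t; simpa using (hasDerivAt_id t).const_mul κ
  have hcoshne : ∀ t : ℝ, Real.cosh (κ * t) ≠ 0 := fun t => (Real.cosh_pos (κ * t)).ne'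
  -- f' as cleaner formula
  have hf'eq : f' = fun t : ℝ => b / Real.cosh (κ * t) := by
    funext t
    rw [hf', hb]
    field_simp
  -- derivative of f' at any point
  have hD : ∀ t : ℝ, HasDerivAt f'
      ((0 * Real.cosh (κ * t) - b * (Real.sinh (κ * t) * κ)) / Real.cosh (κ * t) ^ 2) t := by
    intro t
    rw [hf'eq]
    exact (hasDerivAt_const t b).div ((Real.hasDerivAt_cosh (κ * t)).comp t (hκt t)) (hcoshne t)
  have hDeq : deriv f' = fun t : ℝ =>
      (0 * Real.cosh (κ * t) - b * (Real.sinh (κ * t) * κ)) / Real.cosh (κ * t) ^ 2 :=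
    funext fun t => (hD t).deriv
  -- the constant function
  set nn : ℝ := (n : ℝ) - 2 with hnn
  have hnn1 : (1:ℝ) ≤ nn := by
    have : (3:ℝ) ≤ (n:ℝ) := by exact_mod_cast hn
    simp [hnn]; linarith
  have hnnne : nn ≠ 0 := by linarith
  -- the big function
  set F : ℝ → ℝ := fun t =>
    Real.exp (-2 * f t / nn) *
      (-(κ ^ 2) * ((n:ℝ) - 1) - (1 / nn) *
        ((0 * Real.cosh (κ * t) - b * (Real.sinh (κ * t) * κ)) / Real.cosh (κ * t) ^ 2
          + (b / Real.cosh (κ * t)) ^ 2 +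
          κ * ((n:ℝ) - 1) * (b / Real.cosh (κ * t)) * (Real.sinh (κ * t) / Real.cosh (κ * t)))) with hF
  have hFK : ∀ t, F t = K := by
    intro t
    have := hK t
    rw [hF]
    simp only [hDeq] at this
    simp only [hf'eq, Real.tanh_eq_sinh_div_cosh] at this
    exact this
  -- derivative components at 0
  have hcosh0 : HasDerivAt (fun t : ℝ => Real.cosh (κ * t)) (Real.sinh (κ * 0) * κ) 0 :=
    (Real.hasDerivAt_cosh (κ * 0)).comp 0 (hκt 0)
  have hsinh0 : HasDerivAt (fun t : ℝ => Real.sinh (κ * t)) (Real.cosh (κ * 0) * κ) 0 :=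
    (Real.hasDerivAt_sinh (κ * 0)).comp 0 (hκt 0)
  have hexp0 : HasDerivAt (fun t : ℝ => Real.exp (-2 * f t / nn))
      (Real.exp (-2 * f 0 / nn) * (-2 * f' 0 / nn)) 0 := by
    have h1 : HasDerivAt (fun t : ℝ => -2 * f t / nn) (-2 * f' 0 / nn) 0 :=
      ((hf 0).const_mul (-2)).div_const nn
    exact h1.exp
  -- derivative of second factor at 0
  have hnum0 : HasDerivAt (fun t : ℝ => 0 * Real.cosh (κ * t) - b * (Real.sinh (κ * t) * κ))
      (0 * (Real.sinh (κ * 0) * κ) - b * ((Real.cosh (κ * 0) * κ) * κ)) 0 :=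
    (hcosh0.const_mul 0).sub ((hsinh0.mul_const κ).const_mul b)
  have hden0 : HasDerivAt (fun t : ℝ => Real.cosh (κ * t) ^ 2)
      (2 * Real.cosh (κ * 0) ^ 1 * (Real.sinh (κ * 0) * κ)) 0 := by
    simpa using hcosh0.fun_pow 2
  have hD'0 : HasDerivAt (fun t : ℝ =>
      (0 * Real.cosh (κ * t) - b * (Real.sinh (κ * t) * κ)) / Real.cosh (κ * t) ^ 2)
      (((0 * (Real.sinh (κ * 0) * κ) - b * ((Real.cosh (κ * 0) * κ) * κ)) * Real.cosh (κ * 0) ^ 2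
        - (0 * Real.cosh (κ * 0) - b * (Real.sinh (κ * 0) * κ)) *
          (2 * Real.cosh (κ * 0) ^ 1 * (Real.sinh (κ * 0) * κ))) / (Real.cosh (κ * 0) ^ 2) ^ 2) 0 :=
    hnum0.div hden0 (pow_ne_zero 2 (hcoshne 0))
  have hf'0 : HasDerivAt (fun t : ℝ => b / Real.cosh (κ * t))
      ((0 * Real.cosh (κ * 0) - b * (Real.sinh (κ * 0) * κ)) / Real.cosh (κ * 0) ^ 2) 0 :=
    (hasDerivAt_const 0 b).div hcosh0 (hcoshne 0)
  have hsq0 := hf'0.pow 2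
  have htanh0 : HasDerivAt (fun t : ℝ => Real.sinh (κ * t) / Real.cosh (κ * t))
      ((Real.cosh (κ * 0) * κ * Real.cosh (κ * 0) -
        Real.sinh (κ * 0) * (Real.sinh (κ * 0) * κ)) / Real.cosh (κ * 0) ^ 2) 0 :=
    hsinh0.div hcosh0 (hcoshne 0)
  have hprod0 := ((hf'0.const_mul (κ * ((n:ℝ) - 1))).mul htanh0)
  have hQ0 := ((hD'0.add hsq0).add hprod0).const_mul (1 / nn)
  have hQ0' := (hasDerivAt_const (0:ℝ) (-(κ ^ 2) * ((n:ℝ) - 1))).sub hQ0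
  have hF0 := hexp0.mul hQ0'
  -- F is constant, so its derivative is 0
  have hFconst : HasDerivAt F 0 0 := by
    have : F = fun _ => K := funext hFK
    rw [this]; exact hasDerivAt_const 0 K
  have hEq := hFconst.unique (by simpa [hF, Pi.mul_def, Pi.sub_def] using hF0)
  -- now extract the contradiction
  rw [hf'eq] at hEq
  simp only [Real.cosh_zero, Real.sinh_zero, mul_zero, zero_mul, mul_one, one_pow,
    sub_zero, zero_sub, div_one, pow_one] at hEq
  have hexppos : 0 < Real.exp (-2 * f 0 / nn) := Real.exp_pos _
  -- hEq should now be an algebraic identity in b, κ, nn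
  have hκ2 : 0 < κ ^ 2 := by positivity
  have hn1 : (1:ℝ) ≤ (n:ℝ) - 1 := by
    have : (3:ℝ) ≤ (n:ℝ) := by exact_mod_cast hn
    linarith
  field_simp at hEq
  rw [show ((n:ℝ) - 1) = nn + 1 from by rw [hnn]; ring] at hEq
  have h2 : Real.exp (-(2 * f 0) / nn) * nn * (b * (κ ^ 2 * nn * (nn + 2) + 2 * b ^ 2)) = 0 := by
    rw [neg_div]; linear_combination -nn * hEq
  have hEnn : Real.exp (-(2 * f 0) / nn) * nn ≠ 0 :=
    mul_ne_zero (Real.exp_ne_zero _) hnnne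
  have h3 : b * (κ ^ 2 * nn * (nn + 2) + 2 * b ^ 2) = 0 :=
    (mul_eq_zero.1 h2).resolve_left hEnn
  have hnnp : 0 < nn * (nn + 2) := by nlinarith
  have hpos : 0 < κ ^ 2 * nn * (nn + 2) + 2 * b ^ 2 := by
    nlinarith [mul_pos hκ2 hnnp, sq_nonneg b]
  rcases mul_eq_zero.1 h3 with h | h
  · exact hbne h
  · exact hpos.ne' h
end

section
/- Let n ≥ 3 be an integer, let B > 0, C > 0, and c ∈ ℝ, let I = ((1/C)·exp(−π/(2√B)), (1/C)·exp(π/(2√B))), and define σ : I → ℝ by σ(r) = 1/2 + √B·tan(√B·log(C·r)). Then σ'(r) > 0 for all r ∈ I, and the function r ↦ −((n−1)/2)·( σ'''(r)/σ'(r) − σ''(r)²/σ'(r)² ) − c·σ''(r)/(2·r·σ'(r)) − c·(c−1)/((n−2)·r²) is not constant on I. -/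
open Real Filter

private lemma L1 (sB C r : ℝ) (hC : 0 < C) (hr : 0 < r)
    (hcos : Real.cos (sB * Real.log (C*r)) ≠ 0) :
    HasDerivAt (fun x => Real.tan (sB * Real.log (C*x)))
      ((1 + Real.tan (sB * Real.log (C*r))^2) * sB / r) r := by
  have h1 : HasDerivAt (fun x : ℝ => C*x) C r := by
    simpa using (hasDerivAt_id r).const_mul C
  have h2 : HasDerivAt Real.log (C*r)⁻¹ (C*r) := Real.hasDerivAt_log (mul_pos hC hr).ne'
  have h3 : HasDerivAt (fun x => Real.log (C*x)) ((C*r)⁻¹ * C) r := h2.comp r h1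
  have h4 := h3.const_mul sB
  have h5 := (Real.hasDerivAt_tan hcos).comp r h4
  refine h5.congr_deriv ?_
  rw [show (1:ℝ)/Real.cos (sB * Real.log (C*r))^2
      = 1 + Real.tan (sB * Real.log (C*r))^2 by
    rw [← Real.inv_one_add_tan_sq hcos, one_div, inv_inv]]
  field_simp

private lemma L2 (sB C r : ℝ) (hC : 0 < C) (hr : 0 < r)
    (hcos : Real.cos (sB * Real.log (C*r)) ≠ 0) :
    HasDerivAt (fun x : ℝ => 1/2 + sB * Real.tan (sB * Real.log (C*x)))
      (sB^2 * (1 + Real.tan (sB * Real.log (C*r))^2) / r) r := by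
  have h := ((L1 sB C r hC hr hcos).const_mul sB).const_add (1/2 : ℝ)
  refine h.congr_deriv ?_
  field_simp

private lemma L3 (sB C r : ℝ) (hC : 0 < C) (hr : 0 < r)
    (hcos : Real.cos (sB * Real.log (C*r)) ≠ 0) :
    HasDerivAt (fun x : ℝ => sB^2 * (1 + Real.tan (sB * Real.log (C*x))^2) / x)
      (sB^2 * (1 + Real.tan (sB * Real.log (C*r))^2)
        * (2*sB*Real.tan (sB * Real.log (C*r)) - 1) / r^2) r := by
  set t := Real.tan (sB * Real.log (C*r)) with ht
  have hw := L1 sB C r hC hr hcos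
  have hnum : HasDerivAt (fun x : ℝ => sB^2 * (1 + Real.tan (sB * Real.log (C*x))^2))
      (sB^2 * (2 * t * ((1+t^2) * sB / r))) r := by
    have := ((hw.pow 2).const_add (1:ℝ)).const_mul (sB^2)
    refine this.congr_deriv ?_
    ring
  have h := hnum.div (hasDerivAt_id r) hr.ne'
  refine h.congr_deriv ?_
  simp only [id, ← ht]
  field_simp

private lemma L4 (sB C r : ℝ) (hC : 0 < C) (hr : 0 < r)
    (hcos : Real.cos (sB * Real.log (C*r)) ≠ 0) :
    HasDerivAt (fun x : ℝ => sB^2 * (1 + Real.tan (sB * Real.log (C*x))^2)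
        * (2*sB*Real.tan (sB * Real.log (C*x)) - 1) / x^2)
      (sB^2 * (1 + Real.tan (sB * Real.log (C*r))^2)
        * (6*sB^2*Real.tan (sB * Real.log (C*r))^2
            - 6*sB*Real.tan (sB * Real.log (C*r)) + 2*sB^2 + 2) / r^3) r := by
  set t := Real.tan (sB * Real.log (C*r)) with ht
  have hw := L1 sB C r hC hr hcos
  have hnum : HasDerivAt (fun x : ℝ => sB^2 * (1 + Real.tan (sB * Real.log (C*x))^2)
      * (2*sB*Real.tan (sB * Real.log (C*x)) - 1))
      (sB^2 * (2 * t * ((1+t^2) * sB / r)) * (2*sB*t - 1)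
        + sB^2 * (1 + t^2) * (2*sB*((1+t^2) * sB / r))) r := by
    have h1 : HasDerivAt (fun x : ℝ => sB^2 * (1 + Real.tan (sB * Real.log (C*x))^2))
        (sB^2 * (2 * t * ((1+t^2) * sB / r))) r := by
      have := ((hw.pow 2).const_add (1:ℝ)).const_mul (sB^2)
      refine this.congr_deriv ?_
      ring
    have h2 : HasDerivAt (fun x : ℝ => 2*sB*Real.tan (sB * Real.log (C*x)) - 1)
        (2*sB*((1+t^2) * sB / r)) r := by
      have := (hw.const_mul (2*sB)).sub_const (1:ℝ)
      refine this.congr_deriv ?_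
      ring
    exact h1.mul h2
  have hden : HasDerivAt (fun x : ℝ => x^2) (2*r) r := by
    simpa using hasDerivAt_pow 2 r
  have h := hnum.div hden (pow_ne_zero 2 hr.ne')
  refine h.congr_deriv ?_
  simp only [id, ← ht]
  field_simp
  ring

/-- For `σ(r) = 1/2 + √B·tan(√B·log(C·r))` on
`I = ((1/C)·e^{−π/(2√B)}, (1/C)·e^{π/(2√B)})`: `σ' > 0` on `I`, and the
would-be soliton coefficient
`−((n−1)/2)·(σ'''/σ' − (σ'')²/(σ')²) − c·σ''/(2rσ') − c(c−1)/((n−2)r²)`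
is not constant on `I`. -/
theorem stmt_19 (n : ℕ) (hn : 3 ≤ n) (B C c : ℝ) (hB : 0 < B) (hC : 0 < C)
    (I : Set ℝ)
    (hI : I = Set.Ioo ((1 / C) * Real.exp (-(Real.pi / (2 * Real.sqrt B))))
      ((1 / C) * Real.exp (Real.pi / (2 * Real.sqrt B))))
    (σ : ℝ → ℝ)
    (hσ : σ = fun r : ℝ =>
      1 / 2 + Real.sqrt B * Real.tan (Real.sqrt B * Real.log (C * r))) :
    (∀ r ∈ I, 0 < deriv σ r) ∧
    ¬ ∃ K : ℝ, ∀ r ∈ I,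
      -((n - 1) / 2) *
          (deriv (deriv (deriv σ)) r / deriv σ r -
            (deriv (deriv σ) r) ^ 2 / (deriv σ r) ^ 2) -
        c * deriv (deriv σ) r / (2 * r * deriv σ r) -
        c * (c - 1) / ((n - 2) * r ^ 2) = K := by
  subst hI hσ
  set sB := Real.sqrt B with hsBdef
  have hsB0 : 0 < sB := Real.sqrt_pos.mpr hB
  set lo := (1 / C) * Real.exp (-(Real.pi / (2 * sB))) with hlo
  set hi := (1 / C) * Real.exp (Real.pi / (2 * sB)) with hhi
  have hkey : sB * (Real.pi / (2 * sB)) = Real.pi / 2 := by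
    field_simp
  -- basic facts on I
  have hr0 : ∀ r ∈ Set.Ioo lo hi, 0 < r := fun r hr =>
    lt_trans (by positivity) hr.1
  have hmemIoo : ∀ r ∈ Set.Ioo lo hi,
      sB * Real.log (C * r) ∈ Set.Ioo (-(Real.pi/2)) (Real.pi/2) := by
    intro r hr
    have hr0' : 0 < r := hr0 r hr
    have hClo : C * lo = Real.exp (-(Real.pi / (2 * sB))) := by
      rw [hlo]; field_simp
    have hChi : C * hi = Real.exp (Real.pi / (2 * sB)) := by
      rw [hhi]; field_simp
    have h1 : Real.exp (-(Real.pi / (2 * sB))) < C * r := by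
      rw [← hClo]; exact (mul_lt_mul_iff_right₀ hC).mpr hr.1
    have h2 : C * r < Real.exp (Real.pi / (2 * sB)) := by
      rw [← hChi]; exact (mul_lt_mul_iff_right₀ hC).mpr hr.2
    have hl1 : -(Real.pi / (2 * sB)) < Real.log (C * r) := by
      have := Real.log_lt_log (Real.exp_pos _) h1
      rwa [Real.log_exp] at this
    have hl2 : Real.log (C * r) < Real.pi / (2 * sB) := by
      have := Real.log_lt_log (by positivity) h2
      rwa [Real.log_exp] at this
    constructor
    · have := (mul_lt_mul_iff_right₀ hsB0).mpr hl1
      rw [mul_neg, hkey] at this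
      exact this
    · have := (mul_lt_mul_iff_right₀ hsB0).mpr hl2
      rwa [hkey] at this
  have hcos : ∀ r ∈ Set.Ioo lo hi, Real.cos (sB * Real.log (C * r)) ≠ 0 :=
    fun r hr => (Real.cos_pos_of_mem_Ioo (hmemIoo r hr)).ne'
  -- derivative formulas
  have hd1 : ∀ r ∈ Set.Ioo lo hi,
      deriv (fun r : ℝ => 1 / 2 + sB * Real.tan (sB * Real.log (C * r))) r
        = sB^2 * (1 + Real.tan (sB * Real.log (C*r))^2) / r :=
    fun r hr => (L2 sB C r hC (hr0 r hr) (hcos r hr)).deriv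
  have hd2 : ∀ r ∈ Set.Ioo lo hi,
      deriv (deriv (fun r : ℝ => 1 / 2 + sB * Real.tan (sB * Real.log (C * r)))) r
        = sB^2 * (1 + Real.tan (sB * Real.log (C*r))^2)
            * (2*sB*Real.tan (sB * Real.log (C*r)) - 1) / r^2 := by
    intro r hr
    have hev : deriv (fun r : ℝ => 1 / 2 + sB * Real.tan (sB * Real.log (C * r)))
        =ᶠ[nhds r] fun x => sB^2 * (1 + Real.tan (sB * Real.log (C*x))^2) / x :=
      Filter.eventuallyEq_of_mem (isOpen_Ioo.mem_nhds hr) hd1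
    rw [hev.deriv_eq]
    exact (L3 sB C r hC (hr0 r hr) (hcos r hr)).deriv
  have hd3 : ∀ r ∈ Set.Ioo lo hi,
      deriv (deriv (deriv (fun r : ℝ => 1 / 2 + sB * Real.tan (sB * Real.log (C * r))))) r
        = sB^2 * (1 + Real.tan (sB * Real.log (C*r))^2)
            * (6*sB^2*Real.tan (sB * Real.log (C*r))^2
                - 6*sB*Real.tan (sB * Real.log (C*r)) + 2*sB^2 + 2) / r^3 := by
    intro r hr
    have hev : deriv (deriv (fun r : ℝ => 1 / 2 + sB * Real.tan (sB * Real.log (C * r))))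
        =ᶠ[nhds r] fun x => sB^2 * (1 + Real.tan (sB * Real.log (C*x))^2)
            * (2*sB*Real.tan (sB * Real.log (C*x)) - 1) / x^2 :=
      Filter.eventuallyEq_of_mem (isOpen_Ioo.mem_nhds hr) hd2
    rw [hev.deriv_eq]
    exact (L4 sB C r hC (hr0 r hr) (hcos r hr)).deriv
  constructor
  · intro r hr
    rw [hd1 r hr]
    have h1 : 0 < sB^2 * (1 + Real.tan (sB * Real.log (C*r))^2) := by positivity
    exact div_pos h1 (hr0 r hr)
  · rintro ⟨K, hK⟩
    set ρ : ℕ → ℝ := fun m => (1 / C) * Real.exp (Real.arctan m / sB) with hρ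
    have hρmem : ∀ m : ℕ, ρ m ∈ Set.Ioo lo hi := by
      intro m
      have h1 : -(Real.pi / (2 * sB)) < Real.arctan m / sB := by
        rw [show Real.pi / (2 * sB) = (Real.pi/2) / sB by rw [div_div]]
        rw [← neg_div]
        exact (div_lt_div_iff_of_pos_right hsB0).mpr (Real.neg_pi_div_two_lt_arctan m)
      have h2 : Real.arctan m / sB < Real.pi / (2 * sB) := by
        rw [show Real.pi / (2 * sB) = (Real.pi/2) / sB by rw [div_div]]
        exact (div_lt_div_iff_of_pos_right hsB0).mpr (Real.arctan_lt_pi_div_two m)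
      constructor
      · exact mul_lt_mul_of_pos_left (Real.exp_lt_exp.mpr h1) (by positivity)
      · exact mul_lt_mul_of_pos_left (Real.exp_lt_exp.mpr h2) (by positivity)
    have htan : ∀ m : ℕ, Real.tan (sB * Real.log (C * ρ m)) = m := by
      intro m
      have hCρ : C * ρ m = Real.exp (Real.arctan m / sB) := by
        rw [hρ]; field_simp
      rw [hCρ, Real.log_exp, mul_div_cancel₀ _ hsB0.ne', Real.tan_arctan]
    set a : ℝ := -((n:ℝ) - 1) * sB^2 with ha
    set b : ℝ := ((n:ℝ) - 1 - c) * sB with hb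
    set d : ℝ := -(((n:ℝ) - 1)/2) * (2*sB^2 + 1) + c/2 - c*(c-1)/((n:ℝ) - 2) with hd
    have hn3 : (3:ℝ) ≤ (n:ℝ) := by exact_mod_cast hn
    have hn2 : ((n:ℝ) - 2) ≠ 0 := by linarith
    have key : ∀ m : ℕ, a * (m:ℝ)^2 + b * m + d = K * (ρ m)^2 := by
      intro m
      have hm := hρmem m
      have hρ0 : 0 < ρ m := hr0 _ hm
      have h := hK (ρ m) hm
      rw [hd1 _ hm, hd2 _ hm, hd3 _ hm, htan m] at h
      have hs : (0:ℝ) < 1 + (m:ℝ)^2 := by positivity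
      have h2 : (a * (m:ℝ)^2 + b * m + d) / (ρ m)^2 = K := by
        rw [← h, ha, hb, hd]
        field_simp
        ring
      rw [← h2, div_mul_cancel₀]
      exact pow_ne_zero 2 hρ0.ne'
    -- limits
    have hpow : Filter.Tendsto (fun m : ℕ => ((m:ℝ))^2) atTop atTop :=
      (tendsto_pow_atTop two_ne_zero).comp tendsto_natCast_atTop_atTop
    have hL1 : Filter.Tendsto (fun m : ℕ => (a * (m:ℝ)^2 + b * m + d)/(m:ℝ)^2)
        atTop (nhds a) := by
      have h1 : Filter.Tendsto (fun m : ℕ => a + b/(m:ℝ) + d/((m:ℝ))^2)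
          atTop (nhds (a + 0 + 0)) :=
        (tendsto_const_nhds.add (tendsto_const_div_atTop_nhds_zero_nat b)).add
          (tendsto_const_nhds.div_atTop hpow)
      rw [add_zero, add_zero] at h1
      refine h1.congr' ?_
      filter_upwards [Filter.eventually_ge_atTop 1] with m hm
      have hm0 : ((m:ℝ)) ≠ 0 := by
        have : (1:ℝ) ≤ (m:ℝ) := by exact_mod_cast hm
        linarith
      field_simp
    have hL2 : Filter.Tendsto (fun m : ℕ => K * (ρ m)^2/(m:ℝ)^2) atTop (nhds 0) := by
      have harc : Filter.Tendsto (fun m : ℕ => Real.arctan m) atTop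
          (nhds (Real.pi/2)) :=
        (Real.tendsto_arctan_atTop.mono_right nhdsWithin_le_nhds).comp
          tendsto_natCast_atTop_atTop
      have hnum : Filter.Tendsto (fun m : ℕ => K * (ρ m)^2) atTop
          (nhds (K * ((1/C) * Real.exp ((Real.pi/2)/sB))^2)) := by
        have h1 : Filter.Tendsto (fun m : ℕ => Real.exp (Real.arctan m / sB)) atTop
            (nhds (Real.exp ((Real.pi/2)/sB))) := Real.continuous_exp.continuousAt.tendsto.comp (harc.div_const sB)
        exact (((h1.const_mul (1/C)).pow 2).const_mul K)
      exact hnum.div_atTop hpow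
    have := tendsto_nhds_unique hL1 (by simpa only [key] using hL2)
    rw [ha] at this
    nlinarith [pow_pos hsB0 2]
end
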